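/- arXiv:1601.02271 — 4 statements merged into one kernel-verified Lean document; each statement's English description precedes it below -/
import Mathlib

section
/- Asymmetric Lopsided Lovász Local Lemma: Let B_1, …, B_N be events in a probability space with a negative dependency graph D on vertex set [N]. If P(B_i) ≤ 1/4 for all i, and for every i the sum of P(B_j) over all j with ij an edge of D is at most 1/4, then P(⋀_{i∈[N]} ¬B_i) > 0. -/
open MeasureTheory
open scoped ENNReal

/-- Asymmetric Lopsided Lovász Local Lemma. The negative dependency graph property is
expressed in cross-multiplied form: conditioned on avoiding any family of non-neighbors,
the probability of `B i` does not increase. -/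
theorem stmt4 {Ω : Type*} [MeasurableSpace Ω] (μ : Measure Ω) [IsProbabilityMeasure μ]
    (N : ℕ) (B : Fin N → Set Ω) (hB : ∀ i, MeasurableSet (B i))
    (D : SimpleGraph (Fin N)) [DecidableRel D.Adj]
    (hneg : ∀ i : Fin N, ∀ J : Finset (Fin N), (∀ j ∈ J, ¬ D.Adj i j ∧ j ≠ i) →
      0 < μ (⋂ j ∈ J, (B j)ᶜ) →
      μ (B i ∩ ⋂ j ∈ J, (B j)ᶜ) ≤ μ (B i) * μ (⋂ j ∈ J, (B j)ᶜ))
    (hp : ∀ i, μ (B i) ≤ 1/4)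
    (hsum : ∀ i, ∑ j ∈ Finset.univ.filter (fun j => D.Adj i j), μ (B j) ≤ 1/4) :
    0 < μ (⋂ i, (B i)ᶜ) := by
  classical
  have h24 : (2:ℝ≥0∞) * (1/4) = 1/2 := by
    have h4 : (4:ℝ≥0∞) = 2 * 2 := by norm_num
    rw [one_div, one_div, h4, ENNReal.mul_inv (by norm_num) (by norm_num), ← mul_assoc,
      ENNReal.mul_inv_cancel (by norm_num) (by norm_num), one_mul]
  -- half lemma : a ≤ b + a/2 → a ≤ 2 * b
  have half : ∀ a b : ℝ≥0∞, a ≠ ⊤ → a ≤ b + (1/2) * a → a ≤ 2 * b := by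
    intro a b ha h
    have h' : a - a / 2 ≤ b := by
      rw [tsub_le_iff_right]
      calc a ≤ b + (1/2) * a := h
      _ = b + a / 2 := by rw [one_div, ← ENNReal.div_eq_inv_mul]
    rw [ENNReal.sub_half ha] at h'
    calc a = 2 * (a / 2) := by
            rw [ENNReal.mul_div_cancel' (by norm_num) (by norm_num)]
      _ ≤ 2 * b := by exact mul_le_mul_right h' 2
  have main : ∀ n : ℕ, ∀ S : Finset (Fin N), S.card ≤ n →
      0 < μ (⋂ j ∈ S, (B j)ᶜ) ∧
      ∀ i : Fin N, μ (B i ∩ ⋂ j ∈ S, (B j)ᶜ) ≤ 2 * μ (B i) * μ (⋂ j ∈ S, (B j)ᶜ) := by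
    intro n
    induction n with
    | zero =>
      intro S hS
      rw [Nat.le_zero, Finset.card_eq_zero] at hS
      subst hS
      simp only [Finset.notMem_empty, Set.iInter_of_empty, Set.iInter_univ, Set.inter_univ,
        measure_univ, mul_one]
      constructor
      · norm_num
      · intro i
        calc μ (B i) = 1 * μ (B i) := (one_mul _).symm
          _ ≤ 2 * μ (B i) := by gcongr <;> norm_num
    | succ n ih =>
      intro S hS
      rcases Nat.lt_or_ge S.card (n+1) with hlt | hge
      · exact ih S (Nat.lt_succ_iff.mp hlt)
      have hcard : S.card = n + 1 := le_antisymm hS hge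
      have hne : S.Nonempty := Finset.card_pos.mp (by omega)
      -- positivity
      obtain ⟨k, hk⟩ := hne
      set S' := S.erase k with hS'
      have hcard' : S'.card = n := by
        rw [hS', Finset.card_erase_of_mem hk, hcard]; omega
      obtain ⟨hpos', hcond'⟩ := ih S' (le_of_eq hcard')
      have hins : S = insert k S' := (Finset.insert_erase hk).symm
      have hsplit : μ (⋂ j ∈ S', (B j)ᶜ) ≤ μ (⋂ j ∈ S, (B j)ᶜ) + μ (B k ∩ ⋂ j ∈ S', (B j)ᶜ) := by
        have : (⋂ j ∈ S', (B j)ᶜ) ⊆ (⋂ j ∈ S, (B j)ᶜ) ∪ (B k ∩ ⋂ j ∈ S', (B j)ᶜ) := by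
          intro x hx
          by_cases hxk : x ∈ B k
          · exact Or.inr ⟨hxk, hx⟩
          · left
            rw [hins, Finset.set_biInter_insert]
            exact ⟨hxk, hx⟩
        exact (measure_mono this).trans (measure_union_le _ _)
      have hkbound : μ (B k ∩ ⋂ j ∈ S', (B j)ᶜ) ≤ (1/2) * μ (⋂ j ∈ S', (B j)ᶜ) := by
        calc μ (B k ∩ ⋂ j ∈ S', (B j)ᶜ) ≤ 2 * μ (B k) * μ (⋂ j ∈ S', (B j)ᶜ) := hcond' k
          _ ≤ 2 * (1/4) * μ (⋂ j ∈ S', (B j)ᶜ) := by gcongr; exact hp k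
          _ = (1/2) * μ (⋂ j ∈ S', (B j)ᶜ) := by rw [h24]
      have hposS : 0 < μ (⋂ j ∈ S, (B j)ᶜ) := by
        by_contra h
        push_neg at h
        have h0 : μ (⋂ j ∈ S, (B j)ᶜ) = 0 := le_antisymm h zero_le
        rw [h0, zero_add] at hsplit
        have : μ (⋂ j ∈ S', (B j)ᶜ) ≤ (1/2) * μ (⋂ j ∈ S', (B j)ᶜ) := hsplit.trans hkbound
        have hfin : μ (⋂ j ∈ S', (B j)ᶜ) ≠ ⊤ := measure_ne_top _ _
        have hlt : (1/2) * μ (⋂ j ∈ S', (B j)ᶜ) < μ (⋂ j ∈ S', (B j)ᶜ) := by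
          rw [one_div, ← ENNReal.div_eq_inv_mul]
          exact ENNReal.half_lt_self hpos'.ne' hfin
        exact absurd (this.trans_lt hlt) (lt_irrefl _)
      refine ⟨hposS, ?_⟩
      -- conditional bound
      intro i
      by_cases hiS : i ∈ S
      · have : B i ∩ ⋂ j ∈ S, (B j)ᶜ = ∅ := by
          ext x
          simp only [Set.mem_inter_iff, Set.mem_iInter, Set.mem_empty_iff_false, iff_false]
          rintro ⟨hxi, hall⟩
          exact hall i hiS hxi
        rw [this]
        simp
      · set S1 := S.filter (fun j => D.Adj i j) with hS1
        set S2 := S.filter (fun j => ¬ D.Adj i j) with hS2def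
        have hU : S = S1 ∪ S2 :=
          (Finset.filter_union_filter_not_eq (fun j => D.Adj i j) S).symm
        have hSsub2 : S2 ⊆ S := Finset.filter_subset _ _
        have hinterS : (⋂ j ∈ S, (B j)ᶜ) = (⋂ j ∈ S1, (B j)ᶜ) ∩ ⋂ j ∈ S2, (B j)ᶜ := by
          rw [hU]; exact Finset.set_biInter_inter _ _ _
        have hmono2 : μ (⋂ j ∈ S, (B j)ᶜ) ≤ μ (⋂ j ∈ S2, (B j)ᶜ) := by
          rw [hinterS]; exact measure_mono Set.inter_subset_right
        have hpos2 : 0 < μ (⋂ j ∈ S2, (B j)ᶜ) := lt_of_lt_of_le hposS hmono2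
        have hJ : ∀ j ∈ S2, ¬ D.Adj i j ∧ j ≠ i := by
          intro j hj
          rw [hS2def, Finset.mem_filter] at hj
          exact ⟨hj.2, fun h => hiS (h ▸ hj.1)⟩
        have hcross : μ (B i ∩ ⋂ j ∈ S2, (B j)ᶜ) ≤ μ (B i) * μ (⋂ j ∈ S2, (B j)ᶜ) :=
          hneg i S2 hJ hpos2
        -- the key bound : μ(⋂S2) ≤ 2 μ(⋂S)
        have hkey : μ (⋂ j ∈ S2, (B j)ᶜ) ≤ 2 * μ (⋂ j ∈ S, (B j)ᶜ) := by
          have hcover : (⋂ j ∈ S2, (B j)ᶜ) ⊆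
              (⋂ j ∈ S, (B j)ᶜ) ∪ ⋃ k ∈ S1, (B k ∩ ⋂ j ∈ S2, (B j)ᶜ) := by
            intro x hx
            by_cases hx1 : x ∈ ⋂ j ∈ S1, (B j)ᶜ
            · left; rw [hinterS]; exact ⟨hx1, hx⟩
            · right
              simp only [Set.mem_iInter, Set.mem_compl_iff, not_forall, not_not] at hx1
              obtain ⟨k, hk1, hkB⟩ := hx1
              exact Set.mem_biUnion hk1 ⟨hkB, hx⟩
          have hstep : μ (⋂ j ∈ S2, (B j)ᶜ) ≤ μ (⋂ j ∈ S, (B j)ᶜ) +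
              ∑ k ∈ S1, μ (B k ∩ ⋂ j ∈ S2, (B j)ᶜ) := by
            calc μ (⋂ j ∈ S2, (B j)ᶜ) ≤ μ ((⋂ j ∈ S, (B j)ᶜ) ∪ ⋃ k ∈ S1, (B k ∩ ⋂ j ∈ S2, (B j)ᶜ)) :=
                  measure_mono hcover
              _ ≤ μ (⋂ j ∈ S, (B j)ᶜ) + μ (⋃ k ∈ S1, (B k ∩ ⋂ j ∈ S2, (B j)ᶜ)) :=
                  measure_union_le _ _
              _ ≤ μ (⋂ j ∈ S, (B j)ᶜ) + ∑ k ∈ S1, μ (B k ∩ ⋂ j ∈ S2, (B j)ᶜ) := by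
                  gcongr
                  exact measure_biUnion_finset_le _ _
          have hterm : ∑ k ∈ S1, μ (B k ∩ ⋂ j ∈ S2, (B j)ᶜ) ≤ (1/2) * μ (⋂ j ∈ S2, (B j)ᶜ) := by
            rcases Finset.eq_empty_or_nonempty S1 with h1 | h1
            · rw [h1, Finset.sum_empty]; exact zero_le
            · have hcard2 : S2.card ≤ n := by
                have := Finset.card_filter_add_card_filter_not
                  (s := S) (p := fun j => D.Adj i j)
                have h1pos : 0 < S1.card := Finset.card_pos.mpr h1
                rw [hS1] at h1pos
                rw [hS2def]
                omega
              obtain ⟨hpos2', hcond2⟩ := ih S2 hcard2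
              calc ∑ k ∈ S1, μ (B k ∩ ⋂ j ∈ S2, (B j)ᶜ)
                  ≤ ∑ k ∈ S1, 2 * μ (B k) * μ (⋂ j ∈ S2, (B j)ᶜ) :=
                    Finset.sum_le_sum (fun k _ => hcond2 k)
                _ = 2 * (∑ k ∈ S1, μ (B k)) * μ (⋂ j ∈ S2, (B j)ᶜ) := by
                    rw [Finset.mul_sum, Finset.sum_mul]
                _ ≤ 2 * (1/4) * μ (⋂ j ∈ S2, (B j)ᶜ) := by
                    gcongr
                    calc ∑ k ∈ S1, μ (B k) ≤ ∑ k ∈ Finset.univ.filter (fun j => D.Adj i j), μ (B k) := by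
                          apply Finset.sum_le_sum_of_subset
                          rw [hS1]
                          intro j hj
                          rw [Finset.mem_filter] at hj ⊢
                          exact ⟨Finset.mem_univ j, hj.2⟩
                      _ ≤ 1/4 := hsum i
                _ = (1/2) * μ (⋂ j ∈ S2, (B j)ᶜ) := by rw [h24]
          exact half _ _ (measure_ne_top _ _) (hstep.trans (by gcongr))
        calc μ (B i ∩ ⋂ j ∈ S, (B j)ᶜ) ≤ μ (B i ∩ ⋂ j ∈ S2, (B j)ᶜ) := by
              apply measure_mono
              apply Set.inter_subset_inter_right
              rw [hinterS]; exact Set.inter_subset_right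
          _ ≤ μ (B i) * μ (⋂ j ∈ S2, (B j)ᶜ) := hcross
          _ ≤ μ (B i) * (2 * μ (⋂ j ∈ S, (B j)ᶜ)) := by gcongr
          _ = 2 * μ (B i) * μ (⋂ j ∈ S, (B j)ᶜ) := by ring
  have : (⋂ i, (B i)ᶜ) = ⋂ j ∈ (Finset.univ : Finset (Fin N)), (B j)ᶜ := by
    simp
  rw [this]
  exact (main (Finset.univ.card) Finset.univ le_rfl).1
end

section
/- Multidimensional Lu–Székely theorem: Let 𝒮 be the set of part-respecting injections X → Y for partitioned sets X = X₁ ⊔ … ⊔ X_m, Y = Y₁ ⊔ … ⊔ Y_m with |X_k| ≤ |Y_k|, with the uniform probability measure. Let B₁, …, B_N be canonical events, and let D′ be the graph on [N] with ij an edge iff B_i and B_j conflict. Then D′ is a negative dependency graph for B₁, …, B_N. -/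
/-- A part-preserving bijection exists between two finsets whose per-part cards agree. -/
private lemma exists_partBij {Y : Type*} [DecidableEq Y] {m : ℕ} (py : Y → Fin m) :
    ∀ (n : ℕ) (P Q : Finset Y), P.card = n →
      (∀ k, (P.filter fun y => py y = k).card = (Q.filter fun y => py y = k).card) →
      ∃ e : Y → Y, Set.InjOn e ↑P ∧ (∀ y ∈ P, e y ∈ Q ∧ py (e y) = py y) ∧
        ∀ z ∈ Q, ∃ y ∈ P, e y = z := by
  intro n
  induction n with
  | zero =>
    intro P Q hP hk
    have hPe : P = ∅ := Finset.card_eq_zero.mp hP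
    subst hPe
    refine ⟨id, by simp [Set.InjOn], by simp, ?_⟩
    intro z hz
    exfalso
    have h1 := hk (py z)
    have hzmem : z ∈ Q.filter fun y => py y = py z := by simp [hz]
    have h2 : (Q.filter fun y => py y = py z) = ∅ := by
      rw [← Finset.card_eq_zero, ← h1]; simp
    rw [h2] at hzmem; simp at hzmem
  | succ n ih =>
    intro P Q hP hk
    have hpos : 0 < P.card := by omega
    obtain ⟨a, ha⟩ := Finset.card_pos.mp hpos
    have hfa : a ∈ P.filter fun y => py y = py a := by simp [ha]
    have hQf : (Q.filter fun y => py y = py a).Nonempty := by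
      rw [← Finset.card_pos, ← hk]
      exact Finset.card_pos.mpr ⟨a, hfa⟩
    obtain ⟨b, hb⟩ := hQf
    have hbQ : b ∈ Q := (Finset.mem_filter.mp hb).1
    have hbp : py b = py a := (Finset.mem_filter.mp hb).2
    have herase : ∀ k, ((P.erase a).filter fun y => py y = k).card =
        ((Q.erase b).filter fun y => py y = k).card := by
      intro k
      rw [Finset.filter_erase, Finset.filter_erase]
      by_cases hka : py a = k
      · rw [Finset.card_erase_of_mem (by simp [ha, hka]),
          Finset.card_erase_of_mem (by simp [hbQ, hbp, hka]), hk k]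
      · rw [Finset.erase_eq_of_notMem (by simp [hka]),
          Finset.erase_eq_of_notMem (by simp [hbp, hka]), hk k]
    obtain ⟨e', h1, h2, h3⟩ := ih (P.erase a) (Q.erase b)
      (by rw [Finset.card_erase_of_mem ha, hP]; rfl) herase
    refine ⟨fun y => if y = a then b else e' y, ?_, ?_, ?_⟩
    · intro y₁ hy₁ y₂ hy₂ hee
      simp only at hee
      by_cases e1 : y₁ = a <;> by_cases e2 : y₂ = a
      · rw [e1, e2]
      · exfalso
        rw [if_pos e1, if_neg e2] at hee
        have : e' y₂ ∈ Q.erase b :=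
          (h2 y₂ (Finset.mem_erase.mpr ⟨e2, hy₂⟩)).1
        exact (Finset.mem_erase.mp this).1 hee.symm
      · exfalso
        rw [if_neg e1, if_pos e2] at hee
        have : e' y₁ ∈ Q.erase b :=
          (h2 y₁ (Finset.mem_erase.mpr ⟨e1, hy₁⟩)).1
        exact (Finset.mem_erase.mp this).1 hee
      · rw [if_neg e1, if_neg e2] at hee
        have hm1 : y₁ ∈ ↑(P.erase a) :=
          Finset.mem_coe.mpr (Finset.mem_erase.mpr ⟨e1, Finset.mem_coe.mp hy₁⟩)
        have hm2 : y₂ ∈ ↑(P.erase a) :=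
          Finset.mem_coe.mpr (Finset.mem_erase.mpr ⟨e2, Finset.mem_coe.mp hy₂⟩)
        exact h1 hm1 hm2 hee
    · intro y hy
      by_cases e1 : y = a
      · subst e1; simp only [if_pos rfl]
        exact ⟨hbQ, hbp⟩
      · simp only [if_neg e1]
        have := h2 y (Finset.mem_erase.mpr ⟨e1, hy⟩)
        exact ⟨(Finset.mem_erase.mp this.1).2, this.2⟩
    · intro z hz
      by_cases e1 : z = b
      · exact ⟨a, ha, by simp [e1]⟩
      · obtain ⟨y, hy, hey⟩ := h3 z (Finset.mem_erase.mpr ⟨e1, hz⟩)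
        refine ⟨y, (Finset.mem_erase.mp hy).2, ?_⟩
        show (if y = a then b else e' y) = z
        rw [if_neg (Finset.mem_erase.mp hy).1, hey]

private lemma exists_perm {X Y : Type*} [DecidableEq X] [DecidableEq Y] [Fintype Y] {m : ℕ}
    (py : Y → Fin m) (T : Finset X) (v w : X → Y)
    (hv : Set.InjOn v ↑T) (hw : Set.InjOn w ↑T)
    (hp : ∀ t ∈ T, py (v t) = py (w t)) :
    ∃ g : Equiv.Perm Y, (∀ t ∈ T, g (v t) = w t) ∧
      (∀ y, y ∉ T.image v → y ∉ T.image w → g y = y) ∧ (∀ y, py (g y) = py y) := by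
  classical
  have himg : ∀ (u : X → Y), Set.InjOn u ↑T → ∀ k,
      ((T.image u).filter fun y => py y = k) = (T.filter fun t => py (u t) = k).image u := by
    intro u hu k
    ext y
    simp only [Finset.mem_filter, Finset.mem_image]
    constructor
    · rintro ⟨⟨t, ht, rfl⟩, hk⟩; exact ⟨t, ⟨ht, hk⟩, rfl⟩
    · rintro ⟨t, ⟨ht, hk⟩, rfl⟩; exact ⟨⟨t, ht, rfl⟩, hk⟩
  have hsub : ∀ (p : X → Prop) [DecidablePred p], ↑(T.filter p) ⊆ (↑T : Set X) := by
    intro p _ x hx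
    exact Finset.mem_coe.mpr (Finset.filter_subset _ _ (Finset.mem_coe.mp hx))
  have key : ∀ k, ((T.image v).filter fun y => py y = k).card =
      ((T.image w).filter fun y => py y = k).card := by
    intro k
    rw [himg v hv k, himg w hw k,
      Finset.card_image_of_injOn (hv.mono (hsub _)),
      Finset.card_image_of_injOn (hw.mono (hsub _))]
    congr 1
    apply Finset.filter_congr
    intro t ht
    simp [hp t ht]
  set P : Finset Y := T.image w \ T.image v with hPdef
  set Q : Finset Y := T.image v \ T.image w with hQdef
  have hPQ : ∀ k, (P.filter fun y => py y = k).card = (Q.filter fun y => py y = k).card := by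
    intro k
    have h1 : (P.filter fun y => py y = k) =
        ((T.image w).filter fun y => py y = k) \ ((T.image v).filter fun y => py y = k) := by
      ext y; simp only [hPdef, Finset.mem_sdiff, Finset.mem_filter]; tauto
    have h2 : (Q.filter fun y => py y = k) =
        ((T.image v).filter fun y => py y = k) \ ((T.image w).filter fun y => py y = k) := by
      ext y; simp only [hQdef, Finset.mem_sdiff, Finset.mem_filter]; tauto
    rw [h1, h2]
    have c1 := Finset.card_sdiff_add_card_inter
      ((T.image w).filter fun y => py y = k) ((T.image v).filter fun y => py y = k)
    have c2 := Finset.card_sdiff_add_card_inter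
      ((T.image v).filter fun y => py y = k) ((T.image w).filter fun y => py y = k)
    rw [Finset.inter_comm] at c2
    have := key k
    omega
  obtain ⟨e, he1, he2, he3⟩ := exists_partBij py P.card P Q rfl hPQ
  -- the underlying function
  set g0 : Y → Y := fun y =>
    if h : y ∈ T.image v then w (Finset.mem_image.mp h).choose
    else if y ∈ P then e y else y with hg0def
  have hchoose : ∀ (y : Y) (h : y ∈ T.image v),
      (Finset.mem_image.mp h).choose ∈ T ∧ v (Finset.mem_image.mp h).choose = y := by
    intro y h
    obtain ⟨ht, hvt⟩ := (Finset.mem_image.mp h).choose_spec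
    exact ⟨ht, hvt⟩
  have hg0v : ∀ t ∈ T, g0 (v t) = w t := by
    intro t ht
    have h : v t ∈ T.image v := Finset.mem_image_of_mem v ht
    have hc := hchoose (v t) h
    have : (Finset.mem_image.mp h).choose = t :=
      hv (Finset.mem_coe.mpr hc.1) (Finset.mem_coe.mpr ht) hc.2
    simp only [hg0def, dif_pos h, this]
  have hg0fix : ∀ y, y ∉ T.image v → y ∉ T.image w → g0 y = y := by
    intro y h1 h2
    have hyP : y ∉ P := by simp [hPdef, h2]
    simp only [hg0def, dif_neg h1, if_neg hyP]
  have hg0p : ∀ y, py (g0 y) = py y := by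
    intro y
    by_cases h : y ∈ T.image v
    · have hc := hchoose y h
      simp only [hg0def, dif_pos h]
      rw [← hp _ hc.1, hc.2]
    · by_cases h2 : y ∈ P
      · simp only [hg0def, dif_neg h, if_pos h2]
        exact (he2 y h2).2
      · simp only [hg0def, dif_neg h, if_neg h2]
  -- range membership facts
  have hval1 : ∀ y, y ∈ T.image v → g0 y ∈ T.image w := by
    intro y h
    have hc := hchoose y h
    simp only [hg0def, dif_pos h]
    exact Finset.mem_image_of_mem w hc.1
  have hval2 : ∀ y, y ∉ T.image v → y ∈ P → g0 y ∈ Q := by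
    intro y h hP
    simp only [hg0def, dif_neg h, if_pos hP]
    exact (he2 y hP).1
  have hg0inj : Function.Injective g0 := by
    intro y₁ y₂ hee
    by_cases h1 : y₁ ∈ T.image v <;> by_cases h2 : y₂ ∈ T.image v
    · have hc1 := hchoose y₁ h1
      have hc2 := hchoose y₂ h2
      simp only [hg0def, dif_pos h1, dif_pos h2] at hee
      have := hw (Finset.mem_coe.mpr hc1.1) (Finset.mem_coe.mpr hc2.1) hee
      rw [← hc1.2, ← hc2.2, this]
    · exfalso
      have hm1 : g0 y₁ ∈ T.image w := hval1 y₁ h1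
      by_cases hP2 : y₂ ∈ P
      · have hm2 : g0 y₂ ∈ Q := hval2 y₂ h2 hP2
        rw [hee] at hm1
        exact (Finset.mem_sdiff.mp hm2).2 hm1
      · have : y₂ ∉ T.image w := by
          intro hyw
          exact hP2 (Finset.mem_sdiff.mpr ⟨hyw, h2⟩)
        rw [hee, hg0fix y₂ h2 this] at hm1
        exact this hm1
    · exfalso
      have hm2 : g0 y₂ ∈ T.image w := hval1 y₂ h2
      by_cases hP1 : y₁ ∈ P
      · have hm1 : g0 y₁ ∈ Q := hval2 y₁ h1 hP1
        rw [← hee] at hm2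
        exact (Finset.mem_sdiff.mp hm1).2 hm2
      · have : y₁ ∉ T.image w := by
          intro hyw
          exact hP1 (Finset.mem_sdiff.mpr ⟨hyw, h1⟩)
        rw [← hee, hg0fix y₁ h1 this] at hm2
        exact this hm2
    · by_cases hP1 : y₁ ∈ P <;> by_cases hP2 : y₂ ∈ P
      · have e1 : g0 y₁ = e y₁ := by simp only [hg0def, dif_neg h1, if_pos hP1]
        have e2 : g0 y₂ = e y₂ := by simp only [hg0def, dif_neg h2, if_pos hP2]
        rw [e1, e2] at hee
        exact he1 (Finset.mem_coe.mpr hP1) (Finset.mem_coe.mpr hP2) hee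
      · exfalso
        have hm1 : g0 y₁ ∈ Q := hval2 y₁ h1 hP1
        have hw2 : y₂ ∉ T.image w := fun hyw => hP2 (Finset.mem_sdiff.mpr ⟨hyw, h2⟩)
        rw [hee, hg0fix y₂ h2 hw2] at hm1
        exact h2 (Finset.mem_sdiff.mp hm1).1
      · exfalso
        have hm2 : g0 y₂ ∈ Q := hval2 y₂ h2 hP2
        have hw1 : y₁ ∉ T.image w := fun hyw => hP1 (Finset.mem_sdiff.mpr ⟨hyw, h1⟩)
        rw [← hee, hg0fix y₁ h1 hw1] at hm2
        exact h1 (Finset.mem_sdiff.mp hm2).1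
      · have hw1 : y₁ ∉ T.image w := fun hyw => hP1 (Finset.mem_sdiff.mpr ⟨hyw, h1⟩)
        have hw2 : y₂ ∉ T.image w := fun hyw => hP2 (Finset.mem_sdiff.mpr ⟨hyw, h2⟩)
        rw [hg0fix y₁ h1 hw1, hg0fix y₂ h2 hw2] at hee
        exact hee
  refine ⟨Equiv.ofBijective g0 (Finite.injective_iff_bijective.mp hg0inj), ?_, ?_, ?_⟩
  · intro t ht
    exact hg0v t ht
  · intro y hy1 hy2
    exact hg0fix y hy1 hy2
  · intro y
    exact hg0p y

/-- Multidimensional Lu–Székely theorem. `𝒮` is the set of part-respecting injections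
`X → Y` (with respect to part functions `px`, `py` into `Fin m`, and `|X_k| ≤ |Y_k|`),
carrying the uniform measure. The canonical events `B j` (extending the part-respecting
partial bijection `τ j` defined on `T j`) form a negative dependency graph with respect
to the conflict relation: for every `i` and every set `J` of indices `j ≠ i` whose events
do not conflict with `B i`, we have `P(B i ∣ ⋀_{j ∈ J} ¬ B j) ≤ P(B i)`, stated here in
cross-multiplied (division-free) form. -/
theorem stmt6 {X Y : Type*} [Fintype X] [Fintype Y] [DecidableEq X] [DecidableEq Y]
    (m : ℕ) (px : X → Fin m) (py : Y → Fin m)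
    (hcard : ∀ k, (Finset.univ.filter (fun x => px x = k)).card ≤
      (Finset.univ.filter (fun y => py y = k)).card)
    (N : ℕ) (T : Fin N → Finset X) (τ : Fin N → X → Y)
    (hinj : ∀ j, Set.InjOn (τ j) (T j))
    (hpart : ∀ j, ∀ x ∈ T j, py (τ j x) = px x)
    (i : Fin N) (J : Finset (Fin N))
    (hJ : ∀ j ∈ J, j ≠ i ∧
      ¬ ((∃ x ∈ T i ∩ T j, τ i x ≠ τ j x) ∨
         (∃ x₁ ∈ T i, ∃ x₂ ∈ T j, x₁ ≠ x₂ ∧ τ i x₁ = τ j x₂))) :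
    ((Finset.univ.filter (fun f : X → Y => Function.Injective f ∧ ∀ x, py (f x) = px x)).filter
        (fun f => (∀ x ∈ T i, f x = τ i x) ∧ ∀ j ∈ J, ¬ ∀ x ∈ T j, f x = τ j x)).card *
      (Finset.univ.filter (fun f : X → Y =>
        Function.Injective f ∧ ∀ x, py (f x) = px x)).card ≤
    ((Finset.univ.filter (fun f : X → Y => Function.Injective f ∧ ∀ x, py (f x) = px x)).filter
        (fun f => ∀ x ∈ T i, f x = τ i x)).card *
      ((Finset.univ.filter (fun f : X → Y => Function.Injective f ∧ ∀ x, py (f x) = px x)).filter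
        (fun f => ∀ j ∈ J, ¬ ∀ x ∈ T j, f x = τ j x)).card := by
  set S : Finset (X → Y) :=
    Finset.univ.filter (fun f : X → Y => Function.Injective f ∧ ∀ x, py (f x) = px x) with hSdef
  set A : Finset (X → Y) := S.filter (fun f => ∀ x ∈ T i, f x = τ i x) with hAdef
  set B : Finset (X → Y) := S.filter (fun f => ∀ j ∈ J, ¬ ∀ x ∈ T j, f x = τ j x) with hBdef
  set AB : Finset (X → Y) :=
    S.filter (fun f => (∀ x ∈ T i, f x = τ i x) ∧ ∀ j ∈ J, ¬ ∀ x ∈ T j, f x = τ j x)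
    with hABdef
  have hSmem : ∀ f : X → Y, f ∈ S ↔ Function.Injective f ∧ ∀ x, py (f x) = px x := by
    intro f; simp [hSdef]
  -- the finset of admissible tuples of values on `T i`
  set Tup : Finset (X → Y) :=
    Finset.univ.filter (fun v => Set.InjOn v ↑(T i) ∧ (∀ x ∈ T i, py (v x) = px x) ∧
      ∀ x, x ∉ T i → v x = τ i x) with hTupdef
  have hTupmem : ∀ v : X → Y, v ∈ Tup ↔ (Set.InjOn v ↑(T i) ∧ (∀ x ∈ T i, py (v x) = px x) ∧
      ∀ x, x ∉ T i → v x = τ i x) := by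
    intro v; rw [hTupdef, Finset.mem_filter]; simp
  -- the normalized tuple of an injection
  set tup : (X → Y) → (X → Y) := fun σ x => if x ∈ T i then σ x else τ i x with htupdef
  -- choose the correcting permutations
  have hgex : ∀ v : X → Y, ∃ g : Equiv.Perm Y, v ∈ Tup →
      ((∀ t ∈ T i, g (v t) = τ i t) ∧
       (∀ y, y ∉ (T i).image v → y ∉ (T i).image (τ i) → g y = y) ∧
       (∀ y, py (g y) = py y)) := by
    intro v
    by_cases hv : v ∈ Tup
    · obtain ⟨hv1, hv2, hv3⟩ := (hTupmem v).mp hv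
      obtain ⟨g, hg1, hg2, hg3⟩ := exists_perm py (T i) v (τ i) hv1 (hinj i)
        (fun t ht => (hv2 t ht).trans (hpart i t ht).symm)
      exact ⟨g, fun _ => ⟨hg1, hg2, hg3⟩⟩
    · exact ⟨Equiv.refl Y, fun h => absurd h hv⟩
  choose g hg using hgex
  set F : (X → Y) → (X → Y) := fun σ x => g (tup σ) (σ x) with hFdef
  -- basic facts
  have htupT : ∀ (σ : X → Y) (x : X), x ∈ T i → tup σ x = σ x := by
    intro σ x hx; simp only [htupdef, if_pos hx]
  have htupmem : ∀ σ ∈ S, tup σ ∈ Tup := by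
    intro σ hσ
    obtain ⟨hσi, hσp⟩ := (hSmem σ).mp hσ
    rw [hTupmem]
    refine ⟨?_, ?_, ?_⟩
    · intro x hx y hy hxy
      rw [htupT σ x (Finset.mem_coe.mp hx), htupT σ y (Finset.mem_coe.mp hy)] at hxy
      exact hσi hxy
    · intro x hx; rw [htupT σ x hx]; exact hσp x
    · intro x hx; simp only [htupdef, if_neg hx]
  have hgtup := fun (σ : X → Y) (hσ : σ ∈ S) => hg (tup σ) (htupmem σ hσ)
  have hFS : ∀ σ ∈ S, F σ ∈ S := by
    intro σ hσ
    obtain ⟨hσi, hσp⟩ := (hSmem σ).mp hσ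
    rw [hSmem]
    constructor
    · intro a b hab
      exact hσi ((g (tup σ)).injective hab)
    · intro x
      rw [hFdef]
      simp only
      rw [(hgtup σ hσ).2.2 (σ x)]
      exact hσp x
  have hFA : ∀ σ ∈ S, ∀ x ∈ T i, F σ x = τ i x := by
    intro σ hσ x hx
    have : F σ x = g (tup σ) (tup σ x) := by
      rw [hFdef]; simp only; rw [htupT σ x hx]
    rw [this]
    exact (hgtup σ hσ).1 x hx
  -- Fact 2: forcing preserves non-conflicting events
  have hFact2 : ∀ σ ∈ S, ∀ j ∈ J, (∀ x ∈ T j, σ x = τ j x) → ∀ x ∈ T j, F σ x = τ j x := by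
    intro σ hσ j hj hext x hx
    obtain ⟨hσi, hσp⟩ := (hSmem σ).mp hσ
    have hnc := (hJ j hj).2
    push_neg at hnc
    obtain ⟨hnc1, hnc2⟩ := hnc
    by_cases hxi : x ∈ T i
    · rw [hFA σ hσ x hxi]
      exact hnc1 x (Finset.mem_inter.mpr ⟨hxi, hx⟩)
    · have h1 : σ x ∉ (T i).image (tup σ) := by
        intro hmem
        obtain ⟨t, ht, hts⟩ := Finset.mem_image.mp hmem
        rw [htupT σ t ht] at hts
        exact hxi (hσi hts ▸ ht)
      have h2 : σ x ∉ (T i).image (τ i) := by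
        intro hmem
        obtain ⟨t, ht, hts⟩ := Finset.mem_image.mp hmem
        have hne : t ≠ x := fun h => hxi (h ▸ ht)
        exact hnc2 t ht x hx hne (hts.trans (hext x hx))
      have : F σ x = σ x := by
        rw [hFdef]; simp only
        exact (hgtup σ hσ).2.1 (σ x) h1 h2
      rw [this]
      exact hext x hx
  -- going back: reconstruct σ from (σ', v)
  have hback : ∀ v ∈ Tup, ∀ σ' ∈ S, (∀ x ∈ T i, σ' x = τ i x) →
      ((fun x => (g v).symm (σ' x)) ∈ S ∧ tup (fun x => (g v).symm (σ' x)) = v ∧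
        F (fun x => (g v).symm (σ' x)) = σ') := by
    intro v hv σ' hσ' hA'
    obtain ⟨hg1, hg2, hg3⟩ := hg v hv
    obtain ⟨hσi, hσp⟩ := (hSmem σ').mp hσ'
    obtain ⟨hv1, hv2, hv3⟩ := (hTupmem v).mp hv
    have hsymp : ∀ z, py ((g v).symm z) = py z := by
      intro z
      have h := hg3 ((g v).symm z)
      rw [Equiv.apply_symm_apply] at h
      exact h.symm
    have hmemS : (fun x => (g v).symm (σ' x)) ∈ S := by
      rw [hSmem]
      constructor
      · intro a b hab
        exact hσi ((g v).symm.injective hab)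
      · intro x; rw [hsymp (σ' x)]; exact hσp x
    have htupv : tup (fun x => (g v).symm (σ' x)) = v := by
      funext x
      by_cases hx : x ∈ T i
      · have h2 : (g v).symm (σ' x) = v x := by
          rw [hA' x hx, Equiv.symm_apply_eq]
          exact (hg1 x hx).symm
        exact (htupT (fun x => (g v).symm (σ' x)) x hx).trans h2
      · simp only [htupdef, if_neg hx]
        exact (hv3 x hx).symm
    refine ⟨hmemS, htupv, ?_⟩
    funext x
    rw [hFdef]
    simp only
    rw [htupv, Equiv.apply_symm_apply]
  -- |S| = |A| * |Tup|
  have hAmem : ∀ f : X → Y, f ∈ A ↔ f ∈ S ∧ ∀ x ∈ T i, f x = τ i x := by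
    intro f; rw [hAdef, Finset.mem_filter]
  have hScard : S.card = A.card * Tup.card := by
    rw [← Finset.card_product]
    apply Finset.card_bij' (fun σ _ => (F σ, tup σ))
      (fun p _ => fun x => (g p.2).symm (p.1 x))
    · intro σ hσ
      rw [Finset.mem_product]
      exact ⟨(hAmem (F σ)).mpr ⟨hFS σ hσ, hFA σ hσ⟩, htupmem σ hσ⟩
    · intro p hp
      rw [Finset.mem_product] at hp
      obtain ⟨hp1, hp2⟩ := hp
      obtain ⟨hpS, hpA⟩ := (hAmem p.1).mp hp1
      exact (hback p.2 hp2 p.1 hpS hpA).1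
    · intro σ hσ
      funext x
      exact Equiv.symm_apply_apply (g (tup σ)) (σ x)
    · intro p hp
      rw [Finset.mem_product] at hp
      obtain ⟨hp1, hp2⟩ := hp
      obtain ⟨hpS, hpA⟩ := (hAmem p.1).mp hp1
      obtain ⟨hb1, hb2, hb3⟩ := hback p.2 hp2 p.1 hpS hpA
      exact Prod.ext hb3 hb2
  -- |AB| * |Tup| ≤ |B|
  have hABmem : ∀ f : X → Y, f ∈ AB ↔ f ∈ S ∧ (∀ x ∈ T i, f x = τ i x) ∧
      ∀ j ∈ J, ¬ ∀ x ∈ T j, f x = τ j x := by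
    intro f; rw [hABdef, Finset.mem_filter]
  have hBmem : ∀ f : X → Y, f ∈ B ↔ f ∈ S ∧ ∀ j ∈ J, ¬ ∀ x ∈ T j, f x = τ j x := by
    intro f; rw [hBdef, Finset.mem_filter]
  have hle : AB.card * Tup.card ≤ B.card := by
    rw [← Finset.card_product]
    apply Finset.card_le_card_of_injOn (fun p => fun x => (g p.2).symm (p.1 x))
    · intro p hp
      rw [Finset.mem_coe, Finset.mem_product] at hp
      obtain ⟨hp1, hp2⟩ := hp
      obtain ⟨hpS, hpA, hpB⟩ := (hABmem p.1).mp hp1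
      obtain ⟨hb1, hb2, hb3⟩ := hback p.2 hp2 p.1 hpS hpA
      rw [Finset.mem_coe, hBmem]
      refine ⟨hb1, ?_⟩
      intro j hj hext
      apply hpB j hj
      intro x hx
      rw [← hb3]
      exact hFact2 _ hb1 j hj hext x hx
    · intro p hp q hq hpq
      simp only [Finset.coe_product, Set.mem_prod] at hp hq
      obtain ⟨hp1, hp2⟩ := hp
      obtain ⟨hq1, hq2⟩ := hq
      obtain ⟨hpS, hpA, _⟩ := (hABmem p.1).mp hp1
      obtain ⟨hqS, hqA, _⟩ := (hABmem q.1).mp hq1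
      obtain ⟨pb1, pb2, pb3⟩ := hback p.2 hp2 p.1 hpS hpA
      obtain ⟨qb1, qb2, qb3⟩ := hback q.2 hq2 q.1 hqS hqA
      have hpq' : (fun x => (g p.2).symm (p.1 x)) = (fun x => (g q.2).symm (q.1 x)) := hpq
      have h2 : p.2 = q.2 := pb2.symm.trans ((congrArg tup hpq').trans qb2)
      have h1 : p.1 = q.1 := pb3.symm.trans ((congrArg F hpq').trans qb3)
      exact Prod.ext h1 h2
  calc AB.card * S.card = A.card * (AB.card * Tup.card) := by rw [hScard]; ring
    _ ≤ A.card * B.card := Nat.mul_le_mul_left _ hle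
end

section
/- The augmented projective-plane graph G of Proposition 4 is m-partite: its vertex set P ∪ L ∪ T₁ ∪ … ∪ T_{q²+q} ∪ S₁ ∪ … ∪ S_{q²+q} admits a partition into m independent sets U₁, …, U_m with |U_i| ≤ 2(q²+q+1) for every i, and its maximum degree is at most (q+1) + (2m−2). -/
/-- The augmented projective-plane graph: points `P = Fin (q²+q+1)` (first summand),
lines `L = Fin (q²+q+1)` (second summand), incidence `R`, plus for each `i ∈ [q²+q]` a
clique `T_i` (third summand) of order `m-1` joined to the consecutive points
`p_{i-1}, p_i`, and a clique `S_i` (fourth summand) joined to the consecutive lines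
`ℓ_{i-1}, ℓ_i`. -/
def augPG (q m : ℕ) (R : Fin (q ^ 2 + q + 1) → Fin (q ^ 2 + q + 1) → Bool) :
    SimpleGraph ((Fin (q ^ 2 + q + 1) ⊕ Fin (q ^ 2 + q + 1)) ⊕
      ((Fin (q ^ 2 + q) × Fin (m - 1)) ⊕ (Fin (q ^ 2 + q) × Fin (m - 1)))) :=
  SimpleGraph.fromRel (fun x y =>
    match x, y with
    | Sum.inl (Sum.inl p), Sum.inl (Sum.inr l) => R p l = true
    | Sum.inr (Sum.inl (i, _)), Sum.inr (Sum.inl (j, _)) => i = j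
    | Sum.inr (Sum.inl (i, _)), Sum.inl (Sum.inl p) => p = i.castSucc ∨ p = i.succ
    | Sum.inr (Sum.inr (i, _)), Sum.inr (Sum.inr (j, _)) => i = j
    | Sum.inr (Sum.inr (i, _)), Sum.inl (Sum.inr l) => l = i.castSucc ∨ l = i.succ
    | _, _ => False)

/-- The augmented projective-plane graph is `m`-partite with parts of size at most
`2(q²+q+1)`, and its maximum degree is at most `(q+1) + (2m-2)`. Here `R` is the
incidence relation of a projective plane of order `q`: every point lies on `q+1` lines,
every line contains `q+1` points, and two distinct lines (points) determine exactly one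
common point (line). -/
theorem stmt17 (q m : ℕ) (hm : 2 ≤ m) (hq : IsPrimePow q) (hqm : m ≤ q)
    (R : Fin (q ^ 2 + q + 1) → Fin (q ^ 2 + q + 1) → Bool)
    (hpt : ∀ p, (Finset.univ.filter (fun l => R p l = true)).card = q + 1)
    (hln : ∀ l, (Finset.univ.filter (fun p => R p l = true)).card = q + 1)
    (hll : ∀ l₁ l₂, l₁ ≠ l₂ →
      (Finset.univ.filter (fun p => R p l₁ = true ∧ R p l₂ = true)).card = 1)
    (hpp : ∀ p₁ p₂, p₁ ≠ p₂ →
      (Finset.univ.filter (fun l => R p₁ l = true ∧ R p₂ l = true)).card = 1) :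
    ∃ part : ((Fin (q ^ 2 + q + 1) ⊕ Fin (q ^ 2 + q + 1)) ⊕
        ((Fin (q ^ 2 + q) × Fin (m - 1)) ⊕ (Fin (q ^ 2 + q) × Fin (m - 1)))) → Fin m,
      (∀ u v, (augPG q m R).Adj u v → part u ≠ part v) ∧
      (∀ i : Fin m, (part ⁻¹' {i}).ncard ≤ 2 * (q ^ 2 + q + 1)) ∧
      (∀ v, ((augPG q m R).neighborSet v).ncard ≤ (q + 1) + (2 * m - 2)) := by
  classical
  have hq2 : 2 ≤ q := le_trans hm hqm
  have hm1 : 0 < m - 1 := by omega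
  have hn : 0 < q ^ 2 + q := by nlinarith
  refine ⟨fun v => match v with
    | Sum.inl (Sum.inl _) => ⟨0, by omega⟩
    | Sum.inl (Sum.inr _) => ⟨1, by omega⟩
    | Sum.inr (Sum.inl (_, k)) => ⟨k.1 + 1, by have := k.2; omega⟩
    | Sum.inr (Sum.inr (_, k)) =>
        if k.1 = 0 then ⟨0, by omega⟩ else ⟨k.1 + 1, by have := k.2; omega⟩,
    ?_, ?_, ?_⟩
  · -- proper coloring
    intro u v h hpart
    rw [augPG, SimpleGraph.fromRel_adj] at h
    obtain ⟨hne, hr⟩ := h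
    rcases u with (p|l)|(⟨i,k⟩|⟨i,k⟩) <;> rcases v with (p'|l')|(⟨j,k'⟩|⟨j,k'⟩) <;>
      dsimp only at hr hpart <;>
      (try split_ifs at hpart) <;> (try rcases hr with hr | hr) <;>
      first
      | (simp_all [Fin.ext_iff, Prod.ext_iff]; try omega)
      | omega
  · -- part sizes
    intro c
    set F : (Fin (q ^ 2 + q + 1) ⊕ Fin (q ^ 2 + q)) →
        ((Fin (q ^ 2 + q + 1) ⊕ Fin (q ^ 2 + q + 1)) ⊕
          ((Fin (q ^ 2 + q) × Fin (m - 1)) ⊕ (Fin (q ^ 2 + q) × Fin (m - 1)))) :=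
      fun x => match x with
      | Sum.inl p =>
          if c.1 = 0 then Sum.inl (Sum.inl p)
          else if c.1 = 1 then Sum.inl (Sum.inr p)
          else if h : p.1 < q ^ 2 + q then
            Sum.inr (Sum.inl (⟨p.1, h⟩, ⟨c.1 - 1, by have := c.2; omega⟩))
          else Sum.inl (Sum.inl p)
      | Sum.inr i =>
          if c.1 = 0 then Sum.inr (Sum.inr (i, ⟨0, hm1⟩))
          else if c.1 = 1 then Sum.inr (Sum.inl (i, ⟨0, hm1⟩))
          else Sum.inr (Sum.inr (i, ⟨c.1 - 1, by have := c.2; omega⟩)) with hF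
    refine le_trans (Set.ncard_le_ncard (t := Set.range F) ?_ (Set.toFinite _)) ?_
    · intro v hv
      simp only [Set.mem_preimage, Set.mem_singleton_iff] at hv
      rcases v with (p|l)|(⟨i,k⟩|⟨i,k⟩) <;> dsimp only at hv
      · refine ⟨Sum.inl p, ?_⟩
        have hc : c.1 = 0 := by rw [← hv]
        simp [hF, hc]
      · refine ⟨Sum.inl l, ?_⟩
        have hc : c.1 = 1 := by rw [← hv]
        simp [hF, hc]
      · -- T vertex, colour k+1
        have hc : c.1 = k.1 + 1 := by rw [← hv]
        by_cases hk : k.1 = 0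
        · refine ⟨Sum.inr i, ?_⟩
          simp only [hF, hc, hk]
          norm_num
          simp [Prod.ext_iff, Fin.ext_iff, hk]
        · refine ⟨Sum.inl i.castSucc, ?_⟩
          have h1 : (i.castSucc : Fin (q ^ 2 + q + 1)).1 < q ^ 2 + q := i.2
          simp only [hF, hc]
          rw [if_neg (by omega), if_neg (by omega), dif_pos h1]
          congr 2 <;> exact Fin.ext (by simp)
      · -- S vertex
        have hc : c = if k.1 = 0 then ⟨0, by omega⟩ else ⟨k.1 + 1, by have := k.2; omega⟩ := hv.symm
        by_cases hk : k.1 = 0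
        · refine ⟨Sum.inr i, ?_⟩
          rw [if_pos hk] at hc
          simp only [hF, hc]
          norm_num
          simp [Prod.ext_iff, Fin.ext_iff, hk]
        · refine ⟨Sum.inr i, ?_⟩
          rw [if_neg hk] at hc
          have hc1 : c.1 = k.1 + 1 := by rw [hc]
          simp only [hF, hc1]
          rw [if_neg (by omega), if_neg (by omega)]
          simp [Prod.ext_iff, Fin.ext_iff]
    · calc (Set.range F).ncard = (F '' Set.univ).ncard := by rw [Set.image_univ]
        _ ≤ (Set.univ : Set (Fin (q ^ 2 + q + 1) ⊕ Fin (q ^ 2 + q))).ncard :=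
            Set.ncard_image_le (Set.toFinite _)
        _ ≤ 2 * (q ^ 2 + q + 1) := by
            rw [Set.ncard_univ, Nat.card_eq_fintype_card]
            simp
            omega
  · -- degree bound
    intro v
    have hcard : ∀ p : Fin (q ^ 2 + q + 1),
        ({l | R p l = true} : Set _).ncard = q + 1 := by
      intro p
      have : ({l | R p l = true} : Set _) =
          ↑(Finset.univ.filter fun l => R p l = true) := by ext x; simp
      rw [this, Set.ncard_coe_finset, hpt]
    have hcard' : ∀ l : Fin (q ^ 2 + q + 1),
        ({p | R p l = true} : Set _).ncard = q + 1 := by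
      intro l
      have : ({p | R p l = true} : Set _) =
          ↑(Finset.univ.filter fun p => R p l = true) := by ext x; simp
      rw [this, Set.ncard_coe_finset, hln]
    have hfin : ∀ n : ℕ, (Set.univ : Set (Fin n)).ncard = n := by
      intro n; rw [Set.ncard_univ]; simp
    rcases v with (p|l)|(⟨i,k⟩|⟨i,k⟩)
    · -- point p
      set i₁ : Fin (q ^ 2 + q) := if h : p.1 < q ^ 2 + q then ⟨p.1, h⟩ else ⟨0, hn⟩ with hi₁
      set i₂ : Fin (q ^ 2 + q) := if h : 0 < p.1 then ⟨p.1 - 1, by have := p.2; omega⟩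
        else ⟨0, hn⟩ with hi₂
      refine le_trans (le_trans (Set.ncard_le_ncard (t :=
          ((fun l => Sum.inl (Sum.inr l)) '' {l | R p l = true} ∪
            (fun k => Sum.inr (Sum.inl (i₁, k))) '' Set.univ) ∪
            (fun k => Sum.inr (Sum.inl (i₂, k))) '' Set.univ)
          ?_ (Set.toFinite _)) (Set.ncard_union_le _ _)) ?_
      · intro w hw
        rw [SimpleGraph.mem_neighborSet, augPG, SimpleGraph.fromRel_adj] at hw
        obtain ⟨-, hr⟩ := hw
        rcases w with (p'|l')|(⟨j,k'⟩|⟨j,k'⟩) <;> dsimp only at hr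
        · exact (hr.elim id id).elim
        · refine Or.inl (Or.inl ⟨l', ?_, rfl⟩)
          rcases hr with hr | hr
          · exact hr
          · exact hr.elim
        · rcases hr with hr | hr
          · exact hr.elim
          · rcases hr with hr | hr
            · subst hr
              have hj : i₁ = j := by
                rw [hi₁, dif_pos (show (j.castSucc : Fin (q ^ 2 + q + 1)).1 < q ^ 2 + q from j.2)]
                exact Fin.ext (by simp)
              exact Or.inl (Or.inr ⟨k', trivial, by rw [hj]⟩)
            · subst hr
              have hj : i₂ = j := by
                rw [hi₂, dif_pos (show 0 < (j.succ : Fin (q ^ 2 + q + 1)).1 from by simp)]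
                exact Fin.ext (by simp)
              exact Or.inr ⟨k', trivial, by rw [hj]⟩
        · exact (hr.elim id id).elim
      · refine le_trans (Nat.add_le_add_right (Set.ncard_union_le _ _) _) ?_
        refine le_trans (Nat.add_le_add (Nat.add_le_add
          (Set.ncard_image_le (Set.toFinite _)) (Set.ncard_image_le (Set.toFinite _)))
          (Set.ncard_image_le (Set.toFinite _))) ?_
        rw [hcard p, hfin (m - 1)]
        omega
    · -- line l
      set i₁ : Fin (q ^ 2 + q) := if h : l.1 < q ^ 2 + q then ⟨l.1, h⟩ else ⟨0, hn⟩ with hi₁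
      set i₂ : Fin (q ^ 2 + q) := if h : 0 < l.1 then ⟨l.1 - 1, by have := l.2; omega⟩
        else ⟨0, hn⟩ with hi₂
      refine le_trans (le_trans (Set.ncard_le_ncard (t :=
          ((fun p => Sum.inl (Sum.inl p)) '' {p | R p l = true} ∪
            (fun k => Sum.inr (Sum.inr (i₁, k))) '' Set.univ) ∪
            (fun k => Sum.inr (Sum.inr (i₂, k))) '' Set.univ)
          ?_ (Set.toFinite _)) (Set.ncard_union_le _ _)) ?_
      · intro w hw
        rw [SimpleGraph.mem_neighborSet, augPG, SimpleGraph.fromRel_adj] at hw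
        obtain ⟨-, hr⟩ := hw
        rcases w with (p'|l')|(⟨j,k'⟩|⟨j,k'⟩) <;> dsimp only at hr
        · refine Or.inl (Or.inl ⟨p', ?_, rfl⟩)
          rcases hr with hr | hr
          · exact hr.elim
          · exact hr
        · exact (hr.elim id id).elim
        · exact (hr.elim id id).elim
        · rcases hr with hr | hr
          · exact hr.elim
          · rcases hr with hr | hr
            · subst hr
              have hj : i₁ = j := by
                rw [hi₁, dif_pos (show (j.castSucc : Fin (q ^ 2 + q + 1)).1 < q ^ 2 + q from j.2)]
                exact Fin.ext (by simp)
              exact Or.inl (Or.inr ⟨k', trivial, by rw [hj]⟩)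
            · subst hr
              have hj : i₂ = j := by
                rw [hi₂, dif_pos (show 0 < (j.succ : Fin (q ^ 2 + q + 1)).1 from by simp)]
                exact Fin.ext (by simp)
              exact Or.inr ⟨k', trivial, by rw [hj]⟩
      · refine le_trans (Nat.add_le_add_right (Set.ncard_union_le _ _) _) ?_
        refine le_trans (Nat.add_le_add (Nat.add_le_add
          (Set.ncard_image_le (Set.toFinite _)) (Set.ncard_image_le (Set.toFinite _)))
          (Set.ncard_image_le (Set.toFinite _))) ?_
        rw [hcard' l, hfin (m - 1)]
        omega
    · -- T vertex
      refine le_trans (le_trans (Set.ncard_le_ncard (t :=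
          (fun k' => Sum.inr (Sum.inl (i, k'))) '' Set.univ ∪
            {Sum.inl (Sum.inl i.castSucc), Sum.inl (Sum.inl i.succ)})
          ?_ (Set.toFinite _)) (Set.ncard_union_le _ _)) ?_
      · intro w hw
        rw [SimpleGraph.mem_neighborSet, augPG, SimpleGraph.fromRel_adj] at hw
        obtain ⟨-, hr⟩ := hw
        rcases w with (p'|l')|(⟨j,k'⟩|⟨j,k'⟩) <;> dsimp only at hr
        · rcases hr with hr | hr
          · rcases hr with hr | hr
            · exact Or.inr (Or.inl (by rw [hr]))
            · exact Or.inr (Or.inr (by rw [hr]; exact rfl))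
          · exact hr.elim
        · exact (hr.elim id id).elim
        · have hj : i = j := by rcases hr with hr | hr; exacts [hr, hr.symm]
          exact Or.inl ⟨k', trivial, by rw [hj]⟩
        · exact (hr.elim id id).elim
      · refine le_trans (Nat.add_le_add (Set.ncard_image_le (Set.toFinite _))
          (le_trans (Set.ncard_insert_le _ _) (by rw [Set.ncard_singleton]))) ?_
        rw [hfin (m - 1)]
        omega
    · -- S vertex
      refine le_trans (le_trans (Set.ncard_le_ncard (t :=
          (fun k' => Sum.inr (Sum.inr (i, k'))) '' Set.univ ∪
            {Sum.inl (Sum.inr i.castSucc), Sum.inl (Sum.inr i.succ)})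
          ?_ (Set.toFinite _)) (Set.ncard_union_le _ _)) ?_
      · intro w hw
        rw [SimpleGraph.mem_neighborSet, augPG, SimpleGraph.fromRel_adj] at hw
        obtain ⟨-, hr⟩ := hw
        rcases w with (p'|l')|(⟨j,k'⟩|⟨j,k'⟩) <;> dsimp only at hr
        · exact (hr.elim id id).elim
        · rcases hr with hr | hr
          · rcases hr with hr | hr
            · exact Or.inr (Or.inl (by rw [hr]))
            · exact Or.inr (Or.inr (by rw [hr]; exact rfl))
          · exact hr.elim
        · exact (hr.elim id id).elim
        · have hj : i = j := by rcases hr with hr | hr; exacts [hr, hr.symm]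
          exact Or.inl ⟨k', trivial, by rw [hj]⟩
      · refine le_trans (Nat.add_le_add (Set.ncard_image_le (Set.toFinite _))
          (le_trans (Set.ncard_insert_le _ _) (by rw [Set.ncard_singleton]))) ?_
        rw [hfin (m - 1)]
        omega
end

section
/- Suppose c is a locally (n/(48Δ²))-bounded edge-coloring of the complete m-partite graph K_{m⊗n}, and G is an m-partite graph with parts U₁, …, U_m of sizes at most n and maximum degree Δ. Then K_{m⊗n} contains a properly colored copy of G; moreover the copy can be chosen so that U_i is mapped into the i-th part of K_{m⊗n} for every i. -/
namespace Stmt19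

open Finset

variable {W : Type*} [Fintype W] [DecidableEq W] {m n Δ : ℕ}

abbrev V (m n : ℕ) := Fin m × Fin n
abbrev TT (W : Type*) (m n : ℕ) := (W × W × W) × (V m n × V m n × V m n)

section Defs

variable (G : SimpleGraph W) [DecidableRel G.Adj] (part : W → Fin m)
  (c : V m n → V m n → ℕ) (σ : W ≃ Fin (Fintype.card W))

def Om : Finset (W → V m n) :=
  univ.filter fun f => Function.Injective f ∧ ∀ x, (f x).1 = part x

def holdsE (e : TT W m n) (f : W → V m n) : Prop :=
  f e.1.1 = e.2.1 ∧ f e.1.2.1 = e.2.2.1 ∧ f e.1.2.2 = e.2.2.2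

instance (e : TT W m n) : DecidablePred (holdsE e) := fun f => by
  unfold holdsE; infer_instance

def EE : Finset (TT W m n) :=
  univ.filter fun e => G.Adj e.1.1 e.1.2.1 ∧ G.Adj e.1.2.1 e.1.2.2 ∧
    σ e.1.1 < σ e.1.2.2 ∧
    (e.2.1).1 = part e.1.1 ∧ (e.2.2.1).1 = part e.1.2.1 ∧ (e.2.2.2).1 = part e.1.2.2 ∧
    c e.2.1 e.2.2.1 = c e.2.2.1 e.2.2.2

def vtxs (e : TT W m n) : Finset W := {e.1.1, e.1.2.1, e.1.2.2}
def slots (e : TT W m n) : Finset (V m n) := {e.2.1, e.2.2.1, e.2.2.2}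

def confl (e s : TT W m n) : Prop :=
  (vtxs e ∩ vtxs s).Nonempty ∨ (slots e ∩ slots s).Nonempty

instance (e s : TT W m n) : Decidable (confl e s) := by unfold confl; infer_instance

def Abar (S : Finset (TT W m n)) : Finset (W → V m n) :=
  (Om part).filter fun f => ∀ s ∈ S, ¬ holdsE s f

def swapF (u : W) (z : Fin n) (f : W → V m n) : W → V m n :=
  fun x => if x = u then (part u, z) else if f x = (part u, z) then f u else f x

end Defs

section SwapLemmas

variable {G : SimpleGraph W} [DecidableRel G.Adj] {part : W → Fin m}
  {c : V m n → V m n → ℕ} {σ : W ≃ Fin (Fintype.card W)}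

lemma mem_Om_iff {f : W → V m n} :
    f ∈ Om part ↔ Function.Injective f ∧ ∀ x, (f x).1 = part x := by
  simp [Om]

lemma swap_mem_Om {f : W → V m n} (hf : f ∈ Om part) (u : W) (z : Fin n) :
    swapF part u z f ∈ Om part := by
  rw [mem_Om_iff] at hf ⊢
  obtain ⟨hinj, hpart⟩ := hf
  constructor
  · intro x y hxy
    simp only [swapF] at hxy
    split_ifs at hxy with h1 h2 h3 h4 h5 h6 h7 h8 <;>
      first
        | (exact hinj hxy)
        | (exact h1.trans h2.symm)
        | (exact absurd hxy.symm h3)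
        | (exact absurd (hinj (h3.trans hxy)) h2)
        | (exact absurd (hinj (h4.trans hxy.symm)) h1)
        | (exact hinj (h4.trans h6.symm))
        | (exact absurd (hinj hxy).symm h5)
        | (exact absurd hxy h4)
        | (exact absurd (hinj hxy) h1)
  · intro x
    by_cases hx : x = u
    · simp [swapF, hx]
    · by_cases hfx : f x = (part u, z)
      · have : part x = part u := by
          have := hpart x; rw [hfx] at this; exact this.symm
        simp [swapF, hx, hfx, hpart u, this]
      · simp [swapF, hx, hfx, hpart x]

lemma swap_swap {f : W → V m n} (hf : f ∈ Om part) (u : W) (z : Fin n) :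
    swapF part u ((f u).2) (swapF part u z f) = f := by
  rw [mem_Om_iff] at hf
  obtain ⟨hinj, hpart⟩ := hf
  have hα : (part u, (f u).2) = f u := by
    ext <;> simp [hpart u]
  funext x
  by_cases hx : x = u
  · subst hx; simp [swapF, hα]
  · simp only [swapF, if_neg hx]
    by_cases hfx : f x = (part u, z)
    · -- inner swap sends x to f u; outer: f u = (part u, (f u).2) so swapped back
      simp only [if_neg hx, if_pos hfx, hα, if_pos rfl]
      exact hfx.symm ▸ rfl
    · simp only [if_neg hx, if_neg hfx]
      rw [if_neg]
      intro h
      rw [hα] at h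
      exact hx (hinj h)

lemma swap_not_holds {f : W → V m n} (hf : f ∈ Om part) (u : W) (z : Fin n)
    {s : TT W m n} (hu : u ∉ vtxs s) (hα : f u ∉ slots s)
    (hns : ¬ holdsE s f) : ¬ holdsE s (swapF part u z f) := by
  intro hh
  apply hns
  simp only [vtxs, mem_insert, mem_singleton, not_or] at hu
  simp only [slots, mem_insert, mem_singleton, not_or] at hα
  obtain ⟨h1, h2, h3⟩ := hh
  have key : ∀ (x : W) (ξ : V m n), x ≠ u → ξ ≠ f u →
      swapF part u z f x = ξ → f x = ξ := by
    intro x ξ hxu hξ h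
    simp only [swapF, if_neg hxu] at h
    by_cases hfx : f x = (part u, z)
    · rw [if_pos hfx] at h; exact absurd h.symm hξ
    · rwa [if_neg hfx] at h
  exact ⟨key _ _ (fun h => hu.1 h.symm) (fun h => hα.1 h.symm) h1,
    key _ _ (fun h => hu.2.1 h.symm) (fun h => hα.2.1 h.symm) h2,
    key _ _ (fun h => hu.2.2 h.symm) (fun h => hα.2.2 h.symm) h3⟩

lemma mem_Abar_iff {S : Finset (TT W m n)} {f : W → V m n} :
    f ∈ Abar part S ↔ f ∈ Om part ∧ ∀ s ∈ S, ¬ holdsE s f := by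
  simp [Abar]

lemma swap_step (S : Finset (TT W m n)) (u : W) (α : V m n) (hα : α.1 = part u)
    (pins : Finset (W × V m n)) (hpv : ∀ p ∈ pins, p.1 ≠ u)
    (havS : ∀ s ∈ S, u ∉ vtxs s ∧ α ∉ slots s)
    (Bad : Finset (Fin n)) (hBad : ∀ p ∈ pins, (p.2).1 = part u → (p.2).2 ∈ Bad) :
    (n - Bad.card) *
      ((Abar part S).filter fun f => (∀ p ∈ pins, f p.1 = p.2) ∧ f u = α).card
    ≤ ((Abar part S).filter fun f => ∀ p ∈ pins, f p.1 = p.2).card := by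
  classical
  set F := (Abar part S).filter (fun f => ∀ p ∈ pins, f p.1 = p.2) with hF
  have hFOm : ∀ f ∈ F, f ∈ Om part := by
    intro f hf
    rw [hF, mem_filter] at hf
    exact (mem_Abar_iff.1 hf.1).1
  -- the fibers
  have hfib : F.card = ∑ z : Fin n, (F.filter fun f => f u = (part u, z)).card := by
    rw [Finset.card_eq_sum_card_fiberwise (f := fun f => (f u).2) (t := univ)
      (fun f _ => mem_univ _)]
    refine Finset.sum_congr rfl fun z _ => ?_
    congr 1
    apply Finset.filter_congr
    intro f hf
    have h1 : (f u).1 = part u := ((mem_Om_iff).1 (hFOm f hf)).2 u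
    constructor
    · intro h; rw [Prod.ext_iff]; exact ⟨h1, h⟩
    · intro h; rw [h]
  -- each good fiber is at least as large as the α-fiber
  have hstep : ∀ z ∉ Bad, (F.filter fun f => f u = α).card ≤
      (F.filter fun f => f u = (part u, z)).card := by
    intro z hz
    apply Finset.card_le_card_of_injOn (swapF part u z)
    · intro f hf
      rw [mem_coe, mem_filter] at hf
      obtain ⟨hfF, hfα⟩ := hf
      have hfOm := hFOm f hfF
      rw [hF, mem_filter] at hfF
      obtain ⟨hfAbar, hfpins⟩ := hfF
      rw [mem_coe, mem_filter]
      constructor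
      · rw [hF, mem_filter]
        constructor
        · rw [mem_Abar_iff]
          refine ⟨swap_mem_Om hfOm u z, fun s hs => ?_⟩
          refine swap_not_holds hfOm u z (havS s hs).1 ?_
            ((mem_Abar_iff.1 hfAbar).2 s hs)
          rw [hfα]; exact (havS s hs).2
        · intro p hp
          have hne : p.1 ≠ u := hpv p hp
          have hfp : f p.1 = p.2 := hfpins p hp
          simp only [swapF, if_neg hne]
          by_cases hc : f p.1 = (part u, z)
          · exfalso
            have : (p.2).1 = part u := by rw [← hfp, hc]
            have : (p.2).2 ∈ Bad := hBad p hp this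
            rw [← hfp, hc] at this
            exact hz this
          · rw [if_neg hc]; exact hfp
      · simp [swapF]
    · intro f hf g hg hfg
      rw [mem_coe, mem_filter] at hf hg
      have h1 : f = swapF part u ((f u).2) (swapF part u z f) :=
        (swap_swap (hFOm f hf.1) u z).symm
      have h2 : g = swapF part u ((g u).2) (swapF part u z g) :=
        (swap_swap (hFOm g hg.1) u z).symm
      rw [h1, h2, hfg, hf.2, hg.2]
  -- sum up
  have hcompl : (Badᶜ : Finset (Fin n)).card = n - Bad.card := by
    rw [Finset.card_compl, Fintype.card_fin]
  calc (n - Bad.card) * ((Abar part S).filter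
        fun f => (∀ p ∈ pins, f p.1 = p.2) ∧ f u = α).card
      = ∑ _z ∈ (Badᶜ : Finset (Fin n)),
          ((Abar part S).filter fun f => (∀ p ∈ pins, f p.1 = p.2) ∧ f u = α).card := by
        rw [Finset.sum_const, hcompl, smul_eq_mul]
    _ ≤ ∑ z ∈ (Badᶜ : Finset (Fin n)), (F.filter fun f => f u = (part u, z)).card := by
        refine Finset.sum_le_sum fun z hz => ?_
        have := hstep z (by simpa using hz)
        refine le_trans (le_of_eq ?_) this
        congr 1
        rw [hF, Finset.filter_filter]
    _ ≤ ∑ z ∈ (univ : Finset (Fin n)), (F.filter fun f => f u = (part u, z)).card :=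
        Finset.sum_le_sum_of_subset (subset_univ _)
    _ = F.card := hfib.symm

lemma not_confl_avoid {e s : TT W m n} (h : ¬ confl e s) :
    (∀ x ∈ vtxs e, x ∉ vtxs s) ∧ (∀ ζ ∈ slots e, ζ ∉ slots s) := by
  unfold confl at h
  push_neg at h
  constructor
  · intro x hx hxs
    have hx' := mem_inter.2 ⟨hx, hxs⟩; rw [h.1] at hx'; simp at hx'
  · intro ζ hζ hζs
    have hζ' := mem_inter.2 ⟨hζ, hζs⟩; rw [h.2] at hζ'; simp at hζ'

lemma lopsided (G : SimpleGraph W) [DecidableRel G.Adj]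
    (c : V m n → V m n → ℕ) (σ : W ≃ Fin (Fintype.card W))
    (S : Finset (TT W m n)) (e : TT W m n) (he : e ∈ EE G part c σ)
    (havS : ∀ s ∈ S, ¬ confl e s) :
    n * ((n-1) * ((n-2) * ((Abar part S).filter (holdsE e)).card)) ≤
      (Abar part S).card := by
  classical
  obtain ⟨⟨u, v, w⟩, α, β, γ⟩ := e
  simp only [EE, mem_filter, mem_univ, true_and] at he
  obtain ⟨hadj1, hadj2, hord, hα, hβ, hγ, _hc⟩ := he
  have huv : u ≠ v := G.ne_of_adj hadj1
  have hvw : v ≠ w := G.ne_of_adj hadj2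
  have huw : u ≠ w := by
    intro h; rw [h] at hord; exact lt_irrefl _ hord
  have hVe : ∀ x ∈ ({u, v, w} : Finset W), ∀ s ∈ S, x ∉ vtxs s := by
    intro x hx s hs
    exact (not_confl_avoid (havS s hs)).1 x (by simpa [vtxs] using hx)
  have hSe : ∀ ζ ∈ ({α, β, γ} : Finset (V m n)), ∀ s ∈ S, ζ ∉ slots s := by
    intro ζ hζ s hs
    exact (not_confl_avoid (havS s hs)).2 ζ (by simpa [slots] using hζ)
  -- step 3 : remove the w-pin
  have step3 : n * ((Abar part S).filter fun f => f w = γ).card ≤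
      (Abar part S).card := by
    have h := swap_step (part := part) S w γ hγ ∅ (by simp)
      (fun s hs => ⟨hVe w (by simp) s hs, hSe γ (by simp) s hs⟩) ∅ (by simp)
    simpa using h
  -- step 2 : remove the v-pin
  have step2 : (n-1) * ((Abar part S).filter fun f => f w = γ ∧ f v = β).card ≤
      ((Abar part S).filter fun f => f w = γ).card := by
    have h := swap_step (part := part) S v β hβ {(w, γ)}
      (by intro p hp; simp at hp; subst hp; exact hvw.symm)
      (fun s hs => ⟨hVe v (by simp) s hs, hSe β (by simp) s hs⟩)
      {γ.2} (by intro p hp _; simp at hp; subst hp; simp)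
    have hcard : (1 : ℕ) = ({γ.2} : Finset (Fin n)).card := by simp
    have heq1 : ((Abar part S).filter fun f =>
        (∀ p ∈ ({(w, γ)} : Finset (W × V m n)), f p.1 = p.2) ∧ f v = β) =
        (Abar part S).filter fun f => f w = γ ∧ f v = β := by
      apply Finset.filter_congr; intro f _; simp
    have heq2 : ((Abar part S).filter fun f =>
        ∀ p ∈ ({(w, γ)} : Finset (W × V m n)), f p.1 = p.2) =
        (Abar part S).filter fun f => f w = γ := by
      apply Finset.filter_congr; intro f _; simp
    rw [heq1, heq2] at h
    refine le_trans (Nat.mul_le_mul_right _ ?_) h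
    simp
  -- step 1 : remove the u-pin
  have step1 : (n-2) * ((Abar part S).filter (holdsE (((u,v,w)),(α,β,γ)))).card ≤
      ((Abar part S).filter fun f => f w = γ ∧ f v = β).card := by
    have h := swap_step (part := part) S u α hα {(v, β), (w, γ)}
      (by intro p hp; simp at hp
          rcases hp with hp | hp <;> subst hp
          · exact huv.symm
          · exact huw.symm)
      (fun s hs => ⟨hVe u (by simp) s hs, hSe α (by simp) s hs⟩)
      {β.2, γ.2} (by intro p hp _; simp at hp
                     rcases hp with hp | hp <;> subst hp <;> simp)
    have heq1 : ((Abar part S).filter fun f =>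
        (∀ p ∈ ({(v, β), (w, γ)} : Finset (W × V m n)), f p.1 = p.2) ∧ f u = α) =
        (Abar part S).filter (holdsE (((u,v,w)),(α,β,γ))) := by
      apply Finset.filter_congr; intro f _
      simp only [mem_insert, mem_singleton, holdsE]
      constructor
      · rintro ⟨hp, hu⟩
        exact ⟨hu, hp (v, β) (Or.inl rfl), hp (w, γ) (Or.inr rfl)⟩
      · rintro ⟨h1, h2, h3⟩
        refine ⟨?_, h1⟩
        rintro p (hp | hp) <;> subst hp
        · exact h2
        · exact h3
    have heq2 : ((Abar part S).filter fun f =>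
        ∀ p ∈ ({(v, β), (w, γ)} : Finset (W × V m n)), f p.1 = p.2) =
        (Abar part S).filter fun f => f w = γ ∧ f v = β := by
      apply Finset.filter_congr; intro f _
      simp only [mem_insert, mem_singleton]
      constructor
      · intro hp
        exact ⟨hp (w, γ) (Or.inr rfl), hp (v, β) (Or.inl rfl)⟩
      · rintro ⟨h1, h2⟩ p (hp | hp) <;> subst hp
        · exact h2
        · exact h1
    rw [heq1, heq2] at h
    refine le_trans (Nat.mul_le_mul_right _ ?_) h
    refine le_trans ?_ (Nat.sub_le_sub_left (Finset.card_insert_le _ _) n)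
    exact Nat.sub_le_sub_left (by simp) n
  calc n * ((n-1) * ((n-2) * ((Abar part S).filter (holdsE ((u,v,w),(α,β,γ)))).card))
      ≤ n * ((n-1) * ((Abar part S).filter fun f => f w = γ ∧ f v = β).card) := by
        exact Nat.mul_le_mul_left _ (Nat.mul_le_mul_left _ step1)
    _ ≤ n * ((Abar part S).filter fun f => f w = γ).card :=
        Nat.mul_le_mul_left _ step2
    _ ≤ (Abar part S).card := step3

end SwapLemmas

section Counting

variable (G : SimpleGraph W) [DecidableRel G.Adj] (part : W → Fin m)
  (c : V m n → V m n → ℕ) (σ : W ≃ Fin (Fintype.card W)) (K : ℕ)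

/-- slots in a given part -/
lemma card_filter_fst (i : Fin m) :
    ((univ : Finset (V m n)).filter fun x => x.1 = i).card = n := by
  have : ((univ : Finset (V m n)).filter fun x => x.1 = i) =
      {i} ×ˢ (univ : Finset (Fin n)) := by
    ext x
    simp only [mem_filter, mem_univ, true_and, Finset.mem_product, mem_singleton,
      and_true]
  rw [this, Finset.card_product]
  simp

/-- triples of slots for a path -/
def Trip (p : W × W × W) : Finset (V m n × V m n × V m n) :=
  univ.filter fun t => t.1.1 = part p.1 ∧ t.2.1.1 = part p.2.1 ∧
    t.2.2.1 = part p.2.2 ∧ c t.1 t.2.1 = c t.2.1 t.2.2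

variable (hK : ∀ (β : V m n) (col : ℕ),
    ((univ : Finset (V m n)).filter fun x => x.1 ≠ β.1 ∧ c β x = col).card ≤ K)

section TripBounds
include hK

/-- pinned first slot -/
lemma trip_pin1 (p : W × W × W) (hne : part p.2.1 ≠ part p.2.2)
    (ζ : V m n) :
    ((Trip part c p).filter fun t => t.1 = ζ).card ≤ n * K := by
  classical
  rw [Finset.card_eq_sum_card_fiberwise (f := fun t => t.2.1)
    (t := (univ : Finset (V m n)).filter fun x => x.1 = part p.2.1)
    (fun t ht => by
      simp only [mem_coe, Trip, mem_filter, mem_univ, true_and] at ht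
      simp [ht.1.2.1])]
  calc ∑ b ∈ ((univ : Finset (V m n)).filter fun x => x.1 = part p.2.1),
        (((Trip part c p).filter fun t => t.1 = ζ).filter fun t => t.2.1 = b).card
      ≤ ∑ _b ∈ ((univ : Finset (V m n)).filter fun x => x.1 = part p.2.1), K := by
        refine Finset.sum_le_sum fun b _ => ?_
        refine le_trans (Finset.card_le_card_of_injOn (fun t => t.2.2)
          (fun t ht => ?_) (fun t ht t' ht' h => ?_)) (hK b (c ζ b))
        · simp only [mem_coe, Trip, mem_filter, mem_univ, true_and] at ht
          obtain ⟨⟨⟨h1, h2, h3, h4⟩, h5⟩, h6⟩ := ht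
          simp only [mem_coe, mem_filter, mem_univ, true_and]
          constructor
          · rw [h3, ← h6, h2]
            exact fun hcon => hne hcon.symm
          · rw [← h6, ← h5]; exact h4.symm
        · simp only [mem_coe, mem_filter] at ht ht'
          obtain ⟨⟨_, h5⟩, h6⟩ := ht
          obtain ⟨⟨_, h5'⟩, h6'⟩ := ht'
          exact Prod.ext (h5.trans h5'.symm) (Prod.ext (h6.trans h6'.symm) h)
    _ = n * K := by rw [Finset.sum_const, card_filter_fst, smul_eq_mul]

/-- pinned middle slot -/
lemma trip_pin2 (p : W × W × W) (hne : part p.2.1 ≠ part p.2.2)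
    (ζ : V m n) :
    ((Trip part c p).filter fun t => t.2.1 = ζ).card ≤ n * K := by
  classical
  rw [Finset.card_eq_sum_card_fiberwise (f := fun t => t.1)
    (t := (univ : Finset (V m n)).filter fun x => x.1 = part p.1)
    (fun t ht => by
      simp only [mem_coe, Trip, mem_filter, mem_univ, true_and] at ht
      simp [ht.1.1])]
  calc ∑ a ∈ ((univ : Finset (V m n)).filter fun x => x.1 = part p.1),
        (((Trip part c p).filter fun t => t.2.1 = ζ).filter fun t => t.1 = a).card
      ≤ ∑ _a ∈ ((univ : Finset (V m n)).filter fun x => x.1 = part p.1), K := by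
        refine Finset.sum_le_sum fun a _ => ?_
        refine le_trans (Finset.card_le_card_of_injOn (fun t => t.2.2)
          (fun t ht => ?_) (fun t ht t' ht' h => ?_)) (hK ζ (c a ζ))
        · simp only [mem_coe, Trip, mem_filter, mem_univ, true_and] at ht
          obtain ⟨⟨⟨h1, h2, h3, h4⟩, h5⟩, h6⟩ := ht
          simp only [mem_coe, mem_filter, mem_univ, true_and]
          constructor
          · rw [h3, ← h5, h2]
            exact fun hcon => hne hcon.symm
          · rw [← h6, ← h5]; exact h4.symm
        · simp only [mem_coe, mem_filter] at ht ht'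
          obtain ⟨⟨_, h5⟩, h6⟩ := ht
          obtain ⟨⟨_, h5'⟩, h6'⟩ := ht'
          exact Prod.ext (h6.trans h6'.symm) (Prod.ext (h5.trans h5'.symm) h)
    _ = n * K := by rw [Finset.sum_const, card_filter_fst, smul_eq_mul]

/-- pinned last slot -/
lemma trip_pin3 (hsym : ∀ v w, c v w = c w v) (p : W × W × W)
    (hne1 : part p.1 ≠ part p.2.1) (ζ : V m n) :
    ((Trip part c p).filter fun t => t.2.2 = ζ).card ≤ n * K := by
  classical
  rw [Finset.card_eq_sum_card_fiberwise (f := fun t => t.2.1)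
    (t := (univ : Finset (V m n)).filter fun x => x.1 = part p.2.1)
    (fun t ht => by
      simp only [mem_coe, Trip, mem_filter, mem_univ, true_and] at ht
      simp [ht.1.2.1])]
  calc ∑ b ∈ ((univ : Finset (V m n)).filter fun x => x.1 = part p.2.1),
        (((Trip part c p).filter fun t => t.2.2 = ζ).filter fun t => t.2.1 = b).card
      ≤ ∑ _b ∈ ((univ : Finset (V m n)).filter fun x => x.1 = part p.2.1), K := by
        refine Finset.sum_le_sum fun b _ => ?_
        refine le_trans (Finset.card_le_card_of_injOn (fun t => t.1)
          (fun t ht => ?_) (fun t ht t' ht' h => ?_)) (hK b (c b ζ))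
        · simp only [mem_coe, Trip, mem_filter, mem_univ, true_and] at ht
          obtain ⟨⟨⟨h1, h2, h3, h4⟩, h5⟩, h6⟩ := ht
          simp only [mem_coe, mem_filter, mem_univ, true_and]
          constructor
          · rw [h1, ← h6, h2]
            exact fun hcon => hne1 hcon
          · rw [← h6, ← h5, hsym t.2.1 t.1]
            exact h4
        · simp only [mem_coe, mem_filter] at ht ht'
          obtain ⟨⟨_, h5⟩, h6⟩ := ht
          obtain ⟨⟨_, h5'⟩, h6'⟩ := ht'
          exact Prod.ext h (Prod.ext (h6.trans h6'.symm) (h5.trans h5'.symm))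
    _ = n * K := by rw [Finset.sum_const, card_filter_fst, smul_eq_mul]

/-- full triple bound -/
lemma trip_le (p : W × W × W) (hne : part p.2.1 ≠ part p.2.2) :
    (Trip part c p).card ≤ n * (n * K) := by
  classical
  rw [Finset.card_eq_sum_card_fiberwise (f := fun t => t.1)
    (t := (univ : Finset (V m n)).filter fun x => x.1 = part p.1)
    (fun t ht => by
      simp only [mem_coe, Trip, mem_filter, mem_univ, true_and] at ht
      simp [ht.1])]
  calc ∑ a ∈ ((univ : Finset (V m n)).filter fun x => x.1 = part p.1),
        ((Trip part c p).filter fun t => t.1 = a).card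
      ≤ ∑ _a ∈ ((univ : Finset (V m n)).filter fun x => x.1 = part p.1), n * K :=
        Finset.sum_le_sum fun a _ => trip_pin1 part c K hK p hne a
    _ = n * (n * K) := by rw [Finset.sum_const, card_filter_fst, smul_eq_mul]

end TripBounds

/-- the set of ordered paths (with an orientation fixed by σ) -/
def PathF : Finset (W × W × W) :=
  univ.filter fun p => G.Adj p.1 p.2.1 ∧ G.Adj p.2.1 p.2.2 ∧ σ p.1 < σ p.2.2

variable (hdeg : ∀ v, G.degree v ≤ Δ)

section PathBounds
include hdeg

lemma mid_count (x : W) :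
    2 * ((PathF G σ).filter fun p => p.2.1 = x).card ≤ Δ * (Δ - 1) := by
  classical
  set N := G.neighborFinset x with hN
  set Pr := (N ×ˢ N).filter (fun q => σ q.1 < σ q.2) with hPr
  set Pr' := (N ×ˢ N).filter (fun q => σ q.2 < σ q.1) with hPr'
  have step1 : ((PathF G σ).filter fun p => p.2.1 = x).card ≤ Pr.card := by
    apply Finset.card_le_card_of_injOn (fun p => (p.1, p.2.2))
    · intro p hp
      simp only [mem_coe, PathF, mem_filter, mem_univ, true_and] at hp
      obtain ⟨⟨h1, h2, h3⟩, h4⟩ := hp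
      rw [mem_coe, hPr, mem_filter, Finset.mem_product]
      refine ⟨⟨?_, ?_⟩, h3⟩
      · rw [hN, SimpleGraph.mem_neighborFinset]
        exact (h4 ▸ h1).symm
      · rw [hN, SimpleGraph.mem_neighborFinset]
        exact h4 ▸ h2
    · intro p hp q hq h
      simp only [mem_coe, mem_filter] at hp hq
      simp only [Prod.mk.injEq] at h
      obtain ⟨h1, h2⟩ := h
      have h3 : p.2.1 = q.2.1 := hp.2.trans hq.2.symm
      exact Prod.ext h1 (Prod.ext h3 h2)
  have step3 : Pr.card = Pr'.card := by
    apply Finset.card_bij (fun q _ => (q.2, q.1))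
    · intro q hq
      rw [hPr, mem_filter, Finset.mem_product] at hq
      rw [hPr', mem_filter, Finset.mem_product]
      exact ⟨⟨hq.1.2, hq.1.1⟩, hq.2⟩
    · intro q hq q' hq' h
      have h1 := congrArg Prod.fst h
      have h2 := congrArg Prod.snd h
      exact Prod.ext h2 h1
    · intro q hq
      rw [hPr', mem_filter, Finset.mem_product] at hq
      refine ⟨(q.2, q.1), ?_, rfl⟩
      rw [hPr, mem_filter, Finset.mem_product]
      exact ⟨⟨hq.1.2, hq.1.1⟩, hq.2⟩
  have step2 : Pr.card + Pr'.card ≤ N.card * N.card - N.card := by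
    rw [← Finset.offDiag_card]
    rw [← Finset.card_union_of_disjoint]
    · apply Finset.card_le_card
      intro q hq
      rw [Finset.mem_union, hPr, hPr', mem_filter, mem_filter,
        Finset.mem_product] at hq
      rw [Finset.mem_offDiag]
      rcases hq with ⟨⟨ha, hb⟩, hlt⟩ | ⟨⟨ha, hb⟩, hlt⟩
      · exact ⟨ha, hb, fun hc => absurd (hc ▸ hlt) (lt_irrefl _)⟩
      · exact ⟨ha, hb, fun hc => absurd (hc ▸ hlt) (lt_irrefl _)⟩
    · rw [Finset.disjoint_filter]
      intro q _ h1 h2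
      exact absurd (h1.trans h2) (lt_irrefl _)
  have hdd : N.card * N.card - N.card ≤ Δ * (Δ - 1) := by
    have hd : N.card ≤ Δ := by
      rw [hN, SimpleGraph.card_neighborFinset_eq_degree]
      exact hdeg x
    calc N.card * N.card - N.card = N.card * (N.card - 1) := by
          rcases N.card with _ | k
          · simp
          · simp [Nat.succ_sub_one, Nat.mul_succ]
      _ ≤ Δ * (Δ - 1) :=
          Nat.mul_le_mul hd (Nat.sub_le_sub_right hd 1)
  omega

lemma end_count (x : W) :
    ((PathF G σ).filter fun p => p.1 = x).card +
      ((PathF G σ).filter fun p => p.2.2 = x).card ≤ Δ * (Δ - 1) := by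
  classical
  have hdisj : Disjoint ((PathF G σ).filter fun p => p.1 = x)
      ((PathF G σ).filter fun p => p.2.2 = x) := by
    rw [Finset.disjoint_filter]
    intro p hp h1 h2
    simp only [PathF, mem_filter, mem_univ, true_and] at hp
    rw [h1, h2] at hp
    exact absurd hp.2.2 (lt_irrefl _)
  rw [← Finset.card_union_of_disjoint hdisj, ← Finset.filter_or]
  set B := (univ : Finset (W × W)).filter
    (fun q => q.1 ∈ G.neighborFinset x ∧ q.2 ∈ G.neighborFinset q.1 ∧ q.2 ≠ x)
    with hB
  have hUB : ((PathF G σ).filter fun p => p.1 = x ∨ p.2.2 = x).card ≤ B.card := by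
    apply Finset.card_le_card_of_injOn
      (fun p => (p.2.1, if p.1 = x then p.2.2 else p.1))
    · intro p hp
      simp only [mem_coe, PathF, mem_filter, mem_univ, true_and] at hp
      obtain ⟨⟨h1, h2, h3⟩, h4⟩ := hp
      rw [mem_coe, hB, mem_filter]
      refine ⟨mem_univ _, ?_, ?_, ?_⟩
      · show p.2.1 ∈ G.neighborFinset x
        rw [SimpleGraph.mem_neighborFinset]
        rcases h4 with h4 | h4
        · exact h4 ▸ h1
        · exact (h4 ▸ h2).symm
      · show (if p.1 = x then p.2.2 else p.1) ∈ G.neighborFinset p.2.1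
        rw [SimpleGraph.mem_neighborFinset]
        by_cases hc : p.1 = x
        · simp only [if_pos hc]; exact h2
        · simp only [if_neg hc]; exact h1.symm
      · show (if p.1 = x then p.2.2 else p.1) ≠ x
        by_cases hc : p.1 = x
        · simp only [if_pos hc]
          intro hcon
          rw [hc, hcon] at h3
          exact absurd h3 (lt_irrefl _)
        · simp only [if_neg hc]
          rcases h4 with h4 | h4
          · exact absurd h4 hc
          · intro hcon
            rw [hcon, h4] at h3
            exact absurd h3 (lt_irrefl _)
    · intro p hp q hq h
      simp only [mem_coe, mem_filter] at hp hq
      simp only [Prod.mk.injEq] at h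
      obtain ⟨hmid, hsnd⟩ := h
      by_cases hpc : p.1 = x <;> by_cases hqc : q.1 = x
      · rw [if_pos hpc, if_pos hqc] at hsnd
        exact Prod.ext (hpc.trans hqc.symm) (Prod.ext hmid hsnd)
      · rw [if_pos hpc, if_neg hqc] at hsnd
        exfalso
        simp only [PathF, mem_filter, mem_univ, true_and] at hp hq
        have hq2 : q.2.2 = x := hq.2.resolve_left hqc
        have h1 := hp.1.2.2
        have h2 := hq.1.2.2
        rw [hpc, hsnd] at h1
        rw [hq2] at h2
        exact absurd (h1.trans h2) (lt_irrefl _)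
      · rw [if_neg hpc, if_pos hqc] at hsnd
        exfalso
        simp only [PathF, mem_filter, mem_univ, true_and] at hp hq
        have hp2 : p.2.2 = x := hp.2.resolve_left hpc
        have h1 := hp.1.2.2
        have h2 := hq.1.2.2
        rw [hp2] at h1
        rw [hqc, ← hsnd] at h2
        exact absurd (h1.trans h2) (lt_irrefl _)
      · rw [if_neg hpc, if_neg hqc] at hsnd
        simp only [PathF, mem_filter, mem_univ, true_and] at hp hq
        have hp2 : p.2.2 = x := hp.2.resolve_left hpc
        have hq2 : q.2.2 = x := hq.2.resolve_left hqc
        exact Prod.ext hsnd (Prod.ext hmid (hp2.trans hq2.symm))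
  refine le_trans hUB ?_
  -- bound card B
  rw [hB]
  rw [Finset.card_eq_sum_card_fiberwise (f := fun q => q.1)
    (t := G.neighborFinset x) (fun q hq => by
      simp only [mem_coe, mem_filter, mem_univ, true_and] at hq
      exact hq.1)]
  calc ∑ y ∈ G.neighborFinset x,
        (((univ : Finset (W × W)).filter
          (fun q => q.1 ∈ G.neighborFinset x ∧ q.2 ∈ G.neighborFinset q.1 ∧ q.2 ≠ x)).filter
          (fun q => q.1 = y)).card
      ≤ ∑ y ∈ G.neighborFinset x, (Δ - 1) := by
        refine Finset.sum_le_sum fun y hy => ?_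
        have hxy : x ∈ G.neighborFinset y := by
          rw [SimpleGraph.mem_neighborFinset] at hy ⊢
          exact hy.symm
        have hle : ((G.neighborFinset y).erase x).card ≤ Δ - 1 := by
          rw [Finset.card_erase_of_mem hxy,
            SimpleGraph.card_neighborFinset_eq_degree]
          exact Nat.sub_le_sub_right (hdeg y) 1
        refine le_trans (Finset.card_le_card_of_injOn (fun q => q.2)
          (fun q hq => ?_) (fun q hq q' hq' h => ?_)) hle
        · simp only [mem_coe, mem_filter, mem_univ, true_and] at hq
          obtain ⟨⟨_, h2, h3⟩, h4⟩ := hq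
          rw [mem_coe, Finset.mem_erase]
          exact ⟨h3, h4 ▸ h2⟩
        · simp only [mem_coe, mem_filter] at hq hq'
          exact Prod.ext (hq.2.trans hq'.2.symm) h
    _ ≤ Δ * (Δ - 1) := by
        rw [Finset.sum_const, smul_eq_mul]
        refine Nat.mul_le_mul_right _ ?_
        rw [SimpleGraph.card_neighborFinset_eq_degree]
        exact hdeg x

end PathBounds

lemma mem_PathF_of_EE {s : TT W m n} (hs : s ∈ EE G part c σ) : s.1 ∈ PathF G σ := by
  simp only [EE, mem_filter, mem_univ, true_and] at hs
  simp only [PathF, mem_filter, mem_univ, true_and]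
  exact ⟨hs.1, hs.2.1, hs.2.2.1⟩

lemma mem_Trip_of_EE {s : TT W m n} (hs : s ∈ EE G part c σ) :
    s.2 ∈ Trip part c s.1 := by
  simp only [EE, mem_filter, mem_univ, true_and] at hs
  simp only [Trip, mem_filter, mem_univ, true_and]
  exact ⟨hs.2.2.2.1, hs.2.2.2.2.1, hs.2.2.2.2.2.1, hs.2.2.2.2.2.2⟩

/-- generic two-level fiber bound for the event set -/
lemma ee_fiber_general (q : W × W × W → Prop) [DecidablePred q]
    (P : V m n × V m n × V m n → Prop) [DecidablePred P] (M : ℕ)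
    (hfib : ∀ p ∈ (PathF G σ).filter q, ((Trip part c p).filter P).card ≤ M) :
    ((EE G part c σ).filter fun s => q s.1 ∧ P s.2).card ≤
      ((PathF G σ).filter q).card * M := by
  classical
  rw [Finset.card_eq_sum_card_fiberwise (f := fun s => s.1)
    (t := (PathF G σ).filter q) (fun s hs => by
      rw [mem_coe, mem_filter] at hs
      rw [mem_coe, mem_filter]
      exact ⟨mem_PathF_of_EE G part c σ hs.1, hs.2.1⟩)]
  calc ∑ p ∈ (PathF G σ).filter q,
        (((EE G part c σ).filter fun s => q s.1 ∧ P s.2).filter fun s => s.1 = p).card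
      ≤ ∑ p ∈ (PathF G σ).filter q, M := by
        refine Finset.sum_le_sum fun p hp => ?_
        refine le_trans (Finset.card_le_card_of_injOn (fun s => s.2)
          (fun s hs => ?_) (fun s hs s' hs' h => ?_)) (hfib p hp)
        · rw [mem_coe, mem_filter, mem_filter] at hs
          obtain ⟨⟨hsE, _, hsP⟩, hsp⟩ := hs
          rw [mem_coe, mem_filter]
          exact ⟨hsp ▸ mem_Trip_of_EE G part c σ hsE, hsP⟩
        · rw [mem_coe, mem_filter] at hs hs'
          exact Prod.ext (hs.2.trans hs'.2.symm) h
    _ = ((PathF G σ).filter q).card * M := by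
        rw [Finset.sum_const, smul_eq_mul]

end Counting

section DegreeBounds

variable (G : SimpleGraph W) [DecidableRel G.Adj] (part : W → Fin m)
  (c : V m n → V m n → ℕ) (σ : W ≃ Fin (Fintype.card W)) (K : ℕ)
  (hK : ∀ (β : V m n) (col : ℕ),
    ((univ : Finset (V m n)).filter fun x => x.1 ≠ β.1 ∧ c β x = col).card ≤ K)
  (hind : ∀ u v, G.Adj u v → part u ≠ part v)
  (hdeg : ∀ v, G.degree v ≤ Δ)

include hK hind in
lemma ee_path_only (q : W × W × W → Prop) [DecidablePred q] :
    ((EE G part c σ).filter fun s => q s.1).card ≤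
      ((PathF G σ).filter q).card * (n * (n * K)) := by
  have heq : (EE G part c σ).filter (fun s => q s.1) =
      (EE G part c σ).filter (fun s => q s.1 ∧ (fun _ => True) s.2) := by
    apply Finset.filter_congr; intro s _; simp
  rw [heq]
  refine ee_fiber_general G part c σ q (fun _ => True) (n * (n * K)) fun p hp => ?_
  rw [Finset.filter_true_of_mem (fun _ _ => trivial)]
  rw [mem_filter] at hp
  simp only [PathF, mem_filter, mem_univ, true_and] at hp
  exact trip_le part c K hK p (hind _ _ hp.1.2.1)

include hK hind hdeg in
lemma vtx_bound (x : W) :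
    2 * ((EE G part c σ).filter fun s => x ∈ vtxs s).card ≤
      3 * (Δ * (Δ - 1)) * (n * (n * K)) := by
  classical
  have hsub : (EE G part c σ).filter (fun s => x ∈ vtxs s) ⊆
      ((EE G part c σ).filter fun s => s.1.1 = x) ∪
      ((EE G part c σ).filter fun s => s.1.2.1 = x) ∪
      ((EE G part c σ).filter fun s => s.1.2.2 = x) := by
    intro s hs
    rw [mem_filter] at hs
    obtain ⟨hsE, hsv⟩ := hs
    simp only [vtxs, mem_insert, mem_singleton] at hsv
    simp only [Finset.mem_union, mem_filter]
    rcases hsv with h | h | h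
    · exact Or.inl (Or.inl ⟨hsE, h.symm⟩)
    · exact Or.inl (Or.inr ⟨hsE, h.symm⟩)
    · exact Or.inr ⟨hsE, h.symm⟩
  have hcard : ((EE G part c σ).filter (fun s => x ∈ vtxs s)).card ≤
      ((EE G part c σ).filter fun s => s.1.1 = x).card +
      ((EE G part c σ).filter fun s => s.1.2.1 = x).card +
      ((EE G part c σ).filter fun s => s.1.2.2 = x).card :=
    le_trans (Finset.card_le_card hsub)
      (le_trans (Finset.card_union_le _ _)
        (Nat.add_le_add_right (Finset.card_union_le _ _) _))
  have h1 := ee_path_only G part c σ K hK hind (fun p => p.1 = x)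
  have h2 := ee_path_only G part c σ K hK hind (fun p => p.2.1 = x)
  have h3 := ee_path_only G part c σ K hK hind (fun p => p.2.2 = x)
  have hend := end_count G σ hdeg x
  have hmid := mid_count G σ hdeg x
  set a := ((PathF G σ).filter fun p => p.1 = x).card
  set b := ((PathF G σ).filter fun p => p.2.1 = x).card
  set d := ((PathF G σ).filter fun p => p.2.2 = x).card
  set X := n * (n * K)
  calc 2 * ((EE G part c σ).filter (fun s => x ∈ vtxs s)).card
      ≤ 2 * (a * X + b * X + d * X) := by
        refine Nat.mul_le_mul_left _ ?_
        exact le_trans hcard (add_le_add (add_le_add h1 h2) h3)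
    _ = (2 * (a + d) + 2 * b) * X := by ring
    _ ≤ (2 * (Δ * (Δ - 1)) + Δ * (Δ - 1)) * X := by
        refine Nat.mul_le_mul_right _ ?_
        omega
    _ = 3 * (Δ * (Δ - 1)) * X := by ring

lemma EE_parts {G : SimpleGraph W} [DecidableRel G.Adj] {part : W → Fin m}
    {c : V m n → V m n → ℕ} {σ : W ≃ Fin (Fintype.card W)} {s : TT W m n}
    (hs : s ∈ EE G part c σ) :
    (s.2.1).1 = part s.1.1 ∧ (s.2.2.1).1 = part s.1.2.1 ∧
      (s.2.2.2).1 = part s.1.2.2 := by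
  simp only [EE, mem_filter, mem_univ, true_and] at hs
  exact ⟨hs.2.2.2.1, hs.2.2.2.2.1, hs.2.2.2.2.2.1⟩

set_option maxHeartbeats 1000000 in
include hK hind hdeg in
lemma slot_bound (hsym : ∀ v w, c v w = c w v)
    (hsize : ∀ i : Fin m, ((univ : Finset W).filter (fun w => part w = i)).card ≤ n)
    (ζ : V m n) :
    2 * ((EE G part c σ).filter fun s => ζ ∈ slots s).card ≤
      3 * (Δ * (Δ - 1)) * (n * (n * K)) := by
  classical
  set VW := (univ : Finset W).filter (fun w => part w = ζ.1) with hVW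
  have hsub : (EE G part c σ).filter (fun s => ζ ∈ slots s) ⊆
      ((EE G part c σ).filter fun s => s.2.1 = ζ) ∪
      ((EE G part c σ).filter fun s => s.2.2.1 = ζ) ∪
      ((EE G part c σ).filter fun s => s.2.2.2 = ζ) := by
    intro s hs
    rw [mem_filter] at hs
    obtain ⟨hsE, hsv⟩ := hs
    simp only [slots, mem_insert, mem_singleton] at hsv
    simp only [Finset.mem_union, mem_filter]
    rcases hsv with h | h | h
    · exact Or.inl (Or.inl ⟨hsE, h.symm⟩)
    · exact Or.inl (Or.inr ⟨hsE, h.symm⟩)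
    · exact Or.inr ⟨hsE, h.symm⟩
  -- fiberwise decompositions over the vertices of the part of ζ
  have hB1 : ((EE G part c σ).filter fun s => s.2.1 = ζ).card =
      ∑ x ∈ VW, (((EE G part c σ).filter fun s => s.2.1 = ζ).filter
        fun s => s.1.1 = x).card := by
    refine Finset.card_eq_sum_card_fiberwise (f := fun s : TT W m n => s.1.1) (t := VW)
      fun s hs => ?_
    rw [mem_coe, mem_filter] at hs
    rw [mem_coe, hVW, mem_filter]
    refine ⟨mem_univ _, ?_⟩
    rw [← (EE_parts hs.1).1, hs.2]
  have hB2 : ((EE G part c σ).filter fun s => s.2.2.1 = ζ).card =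
      ∑ x ∈ VW, (((EE G part c σ).filter fun s => s.2.2.1 = ζ).filter
        fun s => s.1.2.1 = x).card := by
    refine Finset.card_eq_sum_card_fiberwise (f := fun s : TT W m n => s.1.2.1) (t := VW)
      fun s hs => ?_
    rw [mem_coe, mem_filter] at hs
    rw [mem_coe, hVW, mem_filter]
    refine ⟨mem_univ _, ?_⟩
    rw [← (EE_parts hs.1).2.1, hs.2]
  have hB3 : ((EE G part c σ).filter fun s => s.2.2.2 = ζ).card =
      ∑ x ∈ VW, (((EE G part c σ).filter fun s => s.2.2.2 = ζ).filter
        fun s => s.1.2.2 = x).card := by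
    refine Finset.card_eq_sum_card_fiberwise (f := fun s : TT W m n => s.1.2.2) (t := VW)
      fun s hs => ?_
    rw [mem_coe, mem_filter] at hs
    rw [mem_coe, hVW, mem_filter]
    refine ⟨mem_univ _, ?_⟩
    rw [← (EE_parts hs.1).2.2, hs.2]
  -- fiber bounds
  have hfib1 : ∀ x : W, (((EE G part c σ).filter fun s => s.2.1 = ζ).filter
      fun s => s.1.1 = x).card ≤
      ((PathF G σ).filter fun p => p.1 = x).card * (n * K) := by
    intro x
    have heq : ((EE G part c σ).filter (fun s => s.2.1 = ζ)).filter
        (fun s => s.1.1 = x) = (EE G part c σ).filter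
        (fun s => (fun p => p.1 = x) s.1 ∧ (fun t => t.1 = ζ) s.2) := by
      rw [Finset.filter_filter]
      apply Finset.filter_congr
      intro s _
      exact and_comm
    rw [heq]
    refine ee_fiber_general G part c σ (fun p => p.1 = x) (fun t => t.1 = ζ)
      (n * K) fun p hp => ?_
    rw [mem_filter] at hp
    simp only [PathF, mem_filter, mem_univ, true_and] at hp
    exact trip_pin1 part c K hK p (hind _ _ hp.1.2.1) ζ
  have hfib2 : ∀ x : W, (((EE G part c σ).filter fun s => s.2.2.1 = ζ).filter
      fun s => s.1.2.1 = x).card ≤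
      ((PathF G σ).filter fun p => p.2.1 = x).card * (n * K) := by
    intro x
    have heq : ((EE G part c σ).filter (fun s => s.2.2.1 = ζ)).filter
        (fun s => s.1.2.1 = x) = (EE G part c σ).filter
        (fun s => (fun p => p.2.1 = x) s.1 ∧ (fun t => t.2.1 = ζ) s.2) := by
      rw [Finset.filter_filter]
      apply Finset.filter_congr
      intro s _
      exact and_comm
    rw [heq]
    refine ee_fiber_general G part c σ (fun p => p.2.1 = x) (fun t => t.2.1 = ζ)
      (n * K) fun p hp => ?_
    rw [mem_filter] at hp
    simp only [PathF, mem_filter, mem_univ, true_and] at hp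
    exact trip_pin2 part c K hK p (hind _ _ hp.1.2.1) ζ
  have hfib3 : ∀ x : W, (((EE G part c σ).filter fun s => s.2.2.2 = ζ).filter
      fun s => s.1.2.2 = x).card ≤
      ((PathF G σ).filter fun p => p.2.2 = x).card * (n * K) := by
    intro x
    have heq : ((EE G part c σ).filter (fun s => s.2.2.2 = ζ)).filter
        (fun s => s.1.2.2 = x) = (EE G part c σ).filter
        (fun s => (fun p => p.2.2 = x) s.1 ∧ (fun t => t.2.2 = ζ) s.2) := by
      rw [Finset.filter_filter]
      apply Finset.filter_congr
      intro s _
      exact and_comm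
    rw [heq]
    refine ee_fiber_general G part c σ (fun p => p.2.2 = x) (fun t => t.2.2 = ζ)
      (n * K) fun p hp => ?_
    rw [mem_filter] at hp
    simp only [PathF, mem_filter, mem_univ, true_and] at hp
    exact trip_pin3 part c K hK hsym p (hind _ _ hp.1.1) ζ
  -- combine
  have hper : ∀ x ∈ VW,
      2 * (((EE G part c σ).filter fun s => s.2.1 = ζ).filter
        fun s => s.1.1 = x).card +
      2 * (((EE G part c σ).filter fun s => s.2.2.1 = ζ).filter
        fun s => s.1.2.1 = x).card +
      2 * (((EE G part c σ).filter fun s => s.2.2.2 = ζ).filter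
        fun s => s.1.2.2 = x).card ≤ 3 * (Δ * (Δ - 1)) * (n * K) := by
    intro x _
    have h1 := hfib1 x
    have h2 := hfib2 x
    have h3 := hfib3 x
    have hend := end_count G σ hdeg x
    have hmid := mid_count G σ hdeg x
    set a := ((PathF G σ).filter fun p => p.1 = x).card
    set b := ((PathF G σ).filter fun p => p.2.1 = x).card
    set d := ((PathF G σ).filter fun p => p.2.2 = x).card
    calc 2 * (((EE G part c σ).filter fun s => s.2.1 = ζ).filter
          fun s => s.1.1 = x).card +
        2 * (((EE G part c σ).filter fun s => s.2.2.1 = ζ).filter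
          fun s => s.1.2.1 = x).card +
        2 * (((EE G part c σ).filter fun s => s.2.2.2 = ζ).filter
          fun s => s.1.2.2 = x).card
        ≤ 2 * (a * (n * K)) + 2 * (b * (n * K)) + 2 * (d * (n * K)) := by
          omega
      _ = (2 * (a + d) + 2 * b) * (n * K) := by ring
      _ ≤ (2 * (Δ * (Δ - 1)) + Δ * (Δ - 1)) * (n * K) := by
          refine Nat.mul_le_mul_right _ ?_
          omega
      _ = 3 * (Δ * (Δ - 1)) * (n * K) := by ring
  have hVWcard : VW.card ≤ n := hsize ζ.1
  calc 2 * ((EE G part c σ).filter (fun s => ζ ∈ slots s)).card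
      ≤ 2 * (((EE G part c σ).filter fun s => s.2.1 = ζ).card +
          ((EE G part c σ).filter fun s => s.2.2.1 = ζ).card +
          ((EE G part c σ).filter fun s => s.2.2.2 = ζ).card) := by
        refine Nat.mul_le_mul_left _ ?_
        refine le_trans (Finset.card_le_card hsub) ?_
        exact le_trans (Finset.card_union_le _ _)
          (Nat.add_le_add_right (Finset.card_union_le _ _) _)
    _ = ∑ x ∈ VW, (2 * (((EE G part c σ).filter fun s => s.2.1 = ζ).filter
          fun s => s.1.1 = x).card +
        2 * (((EE G part c σ).filter fun s => s.2.2.1 = ζ).filter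
          fun s => s.1.2.1 = x).card +
        2 * (((EE G part c σ).filter fun s => s.2.2.2 = ζ).filter
          fun s => s.1.2.2 = x).card) := by
        rw [hB1, hB2, hB3]
        rw [Finset.sum_add_distrib, Finset.sum_add_distrib,
          ← Finset.mul_sum, ← Finset.mul_sum, ← Finset.mul_sum]
        ring
    _ ≤ ∑ x ∈ VW, (3 * (Δ * (Δ - 1)) * (n * K)) := by
        refine Finset.sum_le_sum fun x hx => ?_
        have h := hper x hx
        omega
    _ = VW.card * (3 * (Δ * (Δ - 1)) * (n * K)) := by
        rw [Finset.sum_const, smul_eq_mul]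
    _ ≤ n * (3 * (Δ * (Δ - 1)) * (n * K)) :=
        Nat.mul_le_mul_right _ hVWcard
    _ = 3 * (Δ * (Δ - 1)) * (n * (n * K)) := by ring

set_option maxHeartbeats 1000000 in
include hK hind hdeg in
lemma degree_bound (hsym : ∀ v w, c v w = c w v)
    (hsize : ∀ i : Fin m, ((univ : Finset W).filter (fun w => part w = i)).card ≤ n)
    (e : TT W m n) :
    ((EE G part c σ).filter fun s => confl e s).card ≤
      9 * (Δ * (Δ - 1)) * (n * (n * K)) := by
  classical
  have hsub : (EE G part c σ).filter (fun s => confl e s) ⊆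
      ((EE G part c σ).filter fun s => e.1.1 ∈ vtxs s) ∪
      ((EE G part c σ).filter fun s => e.1.2.1 ∈ vtxs s) ∪
      ((EE G part c σ).filter fun s => e.1.2.2 ∈ vtxs s) ∪
      ((EE G part c σ).filter fun s => e.2.1 ∈ slots s) ∪
      ((EE G part c σ).filter fun s => e.2.2.1 ∈ slots s) ∪
      ((EE G part c σ).filter fun s => e.2.2.2 ∈ slots s) := by
    intro s hs
    rw [mem_filter] at hs
    obtain ⟨hsE, hc⟩ := hs
    simp only [Finset.mem_union, mem_filter]
    rcases hc with ⟨x, hx⟩ | ⟨ζ, hζ⟩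
    · rw [mem_inter] at hx
      obtain ⟨hx1, hx2⟩ := hx
      simp only [vtxs, mem_insert, mem_singleton] at hx1
      rcases hx1 with h | h | h
      · exact Or.inl (Or.inl (Or.inl (Or.inl (Or.inl ⟨hsE, h ▸ hx2⟩))))
      · exact Or.inl (Or.inl (Or.inl (Or.inl (Or.inr ⟨hsE, h ▸ hx2⟩))))
      · exact Or.inl (Or.inl (Or.inl (Or.inr ⟨hsE, h ▸ hx2⟩)))
    · rw [mem_inter] at hζ
      obtain ⟨hζ1, hζ2⟩ := hζ
      simp only [slots, mem_insert, mem_singleton] at hζ1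
      rcases hζ1 with h | h | h
      · exact Or.inl (Or.inl (Or.inr ⟨hsE, h ▸ hζ2⟩))
      · exact Or.inl (Or.inr ⟨hsE, h ▸ hζ2⟩)
      · exact Or.inr ⟨hsE, h ▸ hζ2⟩
  have hcard := Finset.card_le_card hsub
  have hu1 := Finset.card_union_le
    (((EE G part c σ).filter fun s => e.1.1 ∈ vtxs s) ∪
     ((EE G part c σ).filter fun s => e.1.2.1 ∈ vtxs s) ∪
     ((EE G part c σ).filter fun s => e.1.2.2 ∈ vtxs s) ∪
     ((EE G part c σ).filter fun s => e.2.1 ∈ slots s) ∪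
     ((EE G part c σ).filter fun s => e.2.2.1 ∈ slots s))
    ((EE G part c σ).filter fun s => e.2.2.2 ∈ slots s)
  have hu2 := Finset.card_union_le
    (((EE G part c σ).filter fun s => e.1.1 ∈ vtxs s) ∪
     ((EE G part c σ).filter fun s => e.1.2.1 ∈ vtxs s) ∪
     ((EE G part c σ).filter fun s => e.1.2.2 ∈ vtxs s) ∪
     ((EE G part c σ).filter fun s => e.2.1 ∈ slots s))
    ((EE G part c σ).filter fun s => e.2.2.1 ∈ slots s)
  have hu3 := Finset.card_union_le
    (((EE G part c σ).filter fun s => e.1.1 ∈ vtxs s) ∪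
     ((EE G part c σ).filter fun s => e.1.2.1 ∈ vtxs s) ∪
     ((EE G part c σ).filter fun s => e.1.2.2 ∈ vtxs s))
    ((EE G part c σ).filter fun s => e.2.1 ∈ slots s)
  have hu4 := Finset.card_union_le
    (((EE G part c σ).filter fun s => e.1.1 ∈ vtxs s) ∪
     ((EE G part c σ).filter fun s => e.1.2.1 ∈ vtxs s))
    ((EE G part c σ).filter fun s => e.1.2.2 ∈ vtxs s)
  have hu5 := Finset.card_union_le
    ((EE G part c σ).filter fun s => e.1.1 ∈ vtxs s)
    ((EE G part c σ).filter fun s => e.1.2.1 ∈ vtxs s)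
  have hv1 := vtx_bound G part c σ K hK hind hdeg e.1.1
  have hv2 := vtx_bound G part c σ K hK hind hdeg e.1.2.1
  have hv3 := vtx_bound G part c σ K hK hind hdeg e.1.2.2
  have hs1 := slot_bound G part c σ K hK hind hdeg hsym hsize e.2.1
  have hs2 := slot_bound G part c σ K hK hind hdeg hsym hsize e.2.2.1
  have hs3 := slot_bound G part c σ K hK hind hdeg hsym hsize e.2.2.2
  have h9 : 9 * (Δ * (Δ - 1)) * (n * (n * K)) =
      3 * (3 * (Δ * (Δ - 1)) * (n * (n * K))) := by ring
  omega

end DegreeBounds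

section LLL

variable (G : SimpleGraph W) [DecidableRel G.Adj] (part : W → Fin m)
  (c : V m n → V m n → ℕ) (σ : W ≃ Fin (Fintype.card W)) (D : ℕ)

lemma Abar_insert (a : TT W m n) (U : Finset (TT W m n)) :
    Abar part (insert a U) = (Abar part U).filter (fun f => ¬ holdsE a f) := by
  ext f
  simp only [Abar, mem_filter, Finset.mem_insert]
  constructor
  · rintro ⟨h1, h2⟩
    exact ⟨⟨h1, fun s hs => h2 s (Or.inr hs)⟩, h2 a (Or.inl rfl)⟩
  · rintro ⟨⟨h1, h2⟩, h3⟩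
    refine ⟨h1, ?_⟩
    rintro s (rfl | hs)
    · exact h3
    · exact h2 s hs

lemma Abar_anti {S₂ S : Finset (TT W m n)} (h : S₂ ⊆ S) :
    Abar part S ⊆ Abar part S₂ := by
  intro f hf
  rw [mem_Abar_iff] at hf ⊢
  exact ⟨hf.1, fun s hs => hf.2 s (h hs)⟩

lemma card_Abar_insert (a : TT W m n) (U : Finset (TT W m n)) :
    (Abar part (insert a U)).card =
      (Abar part U).card - ((Abar part U).filter (holdsE a)).card := by
  rw [Abar_insert]
  have := Finset.card_filter_add_card_filter_not
    (s := Abar part U) (p := holdsE a)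
  omega

/-- Bernoulli-type inequality over ℕ -/
lemma nat_bern (M : ℕ) : ∀ j : ℕ, M ^ (j+1) ≤ (M-1) ^ (j+1) + (j+1) * M ^ j := by
  rcases Nat.eq_zero_or_pos M with hM | hM
  · subst hM; intro j; simp
  obtain ⟨k, rfl⟩ : ∃ k, M = k + 1 := ⟨M - 1, by omega⟩
  simp only [Nat.add_sub_cancel]
  intro j
  induction j with
  | zero => simp
  | succ j ih =>
    have hle : k ^ (j+1) ≤ (k+1) ^ (j+1) := Nat.pow_le_pow_left (by omega) _
    calc (k+1) ^ (j+1+1) = (k+1) ^ (j+1) * (k+1) := by ring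
      _ ≤ (k ^ (j+1) + (j+1) * (k+1) ^ j) * (k+1) := Nat.mul_le_mul_right _ ih
      _ = (k ^ (j+2) + k ^ (j+1)) + (j+1) * (k+1) ^ (j+1) := by ring
      _ ≤ (k ^ (j+2) + (k+1) ^ (j+1)) + (j+1) * (k+1) ^ (j+1) := by omega
      _ = k ^ (j+2) + (j+2) * (k+1) ^ (j+1) := by ring

lemma nat_bern2 {D j : ℕ} (hD : 1 ≤ D) (hj : j ≤ D) :
    2 * (3*D) ^ j ≤ 3 * (3*D - 1) ^ j := by
  rcases j with _ | i
  · simp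
  · have hbern := nat_bern (3*D) i
    have hq : (3*D) ^ (i+1) = 3 * (D * (3*D) ^ i) := by ring
    have h2 : (i+1) * (3*D) ^ i ≤ D * (3*D) ^ i :=
      Nat.mul_le_mul_right _ hj
    omega

variable (hdegb : ∀ e ∈ EE G part c σ,
    ((EE G part c σ).filter fun s => confl e s).card ≤ D)
  (hD : 1 ≤ D)
  (hnum : 9 * D ≤ 2 * (n * ((n-1) * ((n-2) * 1))))

include hdegb hD hnum in
lemma lll_main : ∀ N (S : Finset (TT W m n)), S ⊆ EE G part c σ → S.card ≤ N →
    ∀ e ∈ EE G part c σ,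
    3 * D * ((Abar part S).filter (holdsE e)).card ≤ (Abar part S).card := by
  intro N
  induction N with
  | zero =>
    intro S hSE hS0 e he
    have hS : S = ∅ := Finset.card_eq_zero.1 (Nat.le_zero.1 hS0)
    subst hS
    have hlop := lopsided (part := part) G c σ ∅ e he (by simp)
    have hP : 3 * D ≤ n * ((n-1) * ((n-2) * 1)) := by omega
    calc 3 * D * ((Abar part ∅).filter (holdsE e)).card
        ≤ n * ((n-1) * ((n-2) * 1)) * ((Abar part ∅).filter (holdsE e)).card :=
          Nat.mul_le_mul_right _ hP
      _ = n * ((n-1) * ((n-2) * ((Abar part ∅).filter (holdsE e)).card)) := by ring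
      _ ≤ (Abar part ∅).card := hlop
  | succ N ih =>
    intro S hSE hScard e he
    classical
    set S₁ := S.filter (fun s => confl e s) with hS₁
    set S₂ := S.filter (fun s => ¬ confl e s) with hS₂
    have hS₂S : S₂ ⊆ S := Finset.filter_subset _ _
    have hunion : S₂ ∪ S₁ = S := by
      rw [hS₁, hS₂, Finset.union_comm, Finset.filter_union_filter_not_eq]
    -- subclaim: product bound
    have subclaim : ∀ T ⊆ S₁,
        (3*D - 1) ^ T.card * (Abar part S₂).card ≤
          (3*D) ^ T.card * (Abar part (S₂ ∪ T)).card := by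
      intro T
      induction T using Finset.induction_on with
      | empty => intro _; simp
      | @insert a T ha ihT =>
        intro hins
        have hTsub : T ⊆ S₁ := fun t ht => hins (Finset.mem_insert_of_mem ht)
        have haS₁ : a ∈ S₁ := hins (Finset.mem_insert_self a T)
        have haS : a ∈ S := Finset.mem_of_mem_filter a haS₁
        have haE : a ∈ EE G part c σ := hSE haS
        have haU : a ∉ S₂ ∪ T := by
          rw [Finset.mem_union]
          rintro (h | h)
          · rw [hS₂, mem_filter] at h
            rw [hS₁, mem_filter] at haS₁
            exact h.2 haS₁.2
          · exact ha h
        have hsmall : (S₂ ∪ T).card ≤ N := by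
          have hsub2 : S₂ ∪ T ⊆ S.erase a := by
            intro t ht
            rw [Finset.mem_erase]
            refine ⟨fun hc => haU (hc ▸ ht), ?_⟩
            rcases Finset.mem_union.1 ht with h | h
            · exact hS₂S h
            · exact Finset.mem_of_mem_filter t (hTsub h)
          calc (S₂ ∪ T).card ≤ (S.erase a).card := Finset.card_le_card hsub2
            _ = S.card - 1 := Finset.card_erase_of_mem haS
            _ ≤ N := by omega
        have hkey := ih (S₂ ∪ T) (fun t ht => by
          rcases Finset.mem_union.1 ht with h | h
          · exact hSE (hS₂S h)
          · exact hSE (Finset.mem_of_mem_filter t (hTsub h))) hsmall a haE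
        have hcardins := card_Abar_insert (part := part) a (S₂ ∪ T)
        have hstep : (3*D - 1) * (Abar part (S₂ ∪ T)).card ≤
            3 * D * (Abar part (S₂ ∪ insert a T)).card := by
          rw [Finset.union_insert, hcardins]
          have hle : ((Abar part (S₂ ∪ T)).filter (holdsE a)).card ≤
              (Abar part (S₂ ∪ T)).card := Finset.card_filter_le _ _
          have h3D := hkey
          have h1 : 3 * D * ((Abar part (S₂ ∪ T)).card -
              ((Abar part (S₂ ∪ T)).filter (holdsE a)).card) =
              3 * D * (Abar part (S₂ ∪ T)).card -
              3 * D * ((Abar part (S₂ ∪ T)).filter (holdsE a)).card :=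
            Nat.mul_sub (3*D) _ _
          have h2 : (3*D - 1) * (Abar part (S₂ ∪ T)).card =
              3 * D * (Abar part (S₂ ∪ T)).card - (Abar part (S₂ ∪ T)).card := by
            rw [Nat.sub_mul, one_mul]
          omega
        have hmono := ihT hTsub
        calc (3*D - 1) ^ (insert a T).card * (Abar part S₂).card
            = (3*D - 1) * ((3*D - 1) ^ T.card * (Abar part S₂).card) := by
              rw [Finset.card_insert_of_notMem ha]
              ring
          _ ≤ (3*D - 1) * ((3*D) ^ T.card * (Abar part (S₂ ∪ T)).card) :=
              Nat.mul_le_mul_left _ hmono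
          _ = (3*D) ^ T.card * ((3*D - 1) * (Abar part (S₂ ∪ T)).card) := by ring
          _ ≤ (3*D) ^ T.card * (3 * D * (Abar part (S₂ ∪ insert a T)).card) :=
              Nat.mul_le_mul_left _ hstep
          _ = (3*D) ^ (insert a T).card * (Abar part (S₂ ∪ insert a T)).card := by
              rw [Finset.card_insert_of_notMem ha]
              ring
    -- instantiate with T = S₁
    have hprod := subclaim S₁ (Finset.Subset.refl _)
    rw [hunion] at hprod
    -- lopsided bound on S₂
    have hlop := lopsided (part := part) G c σ S₂ e he (fun s hs => by
      rw [hS₂, mem_filter] at hs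
      exact hs.2)
    -- monotonicity
    have hmono2 : ((Abar part S).filter (holdsE e)).card ≤
        ((Abar part S₂).filter (holdsE e)).card :=
      Finset.card_le_card (Finset.filter_subset_filter _ (Abar_anti part hS₂S))
    -- j ≤ D
    have hjD : S₁.card ≤ D := by
      refine le_trans (Finset.card_le_card ?_) (hdegb e he)
      intro s hs
      rw [hS₁, mem_filter] at hs
      rw [mem_filter]
      exact ⟨hSE hs.1, hs.2⟩
    -- Bernoulli
    have hbern := nat_bern2 (D := D) (j := S₁.card) hD hjD
    -- numeric: 3D * (3D)^j ≤ P * (3D-1)^j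
    set j := S₁.card
    set P := n * ((n-1) * ((n-2) * 1)) with hPdef
    have hnumeric : 4 * (3 * D * (3*D) ^ j) ≤ 4 * (P * (3*D - 1) ^ j) := by
      calc 4 * (3 * D * (3*D) ^ j) = 3 * D * (2 * (2 * (3*D) ^ j)) := by ring
        _ ≤ 3 * D * (2 * (3 * (3*D - 1) ^ j)) := by
            refine Nat.mul_le_mul_left _ ?_
            exact Nat.mul_le_mul_left _ hbern
        _ = (9 * D) * (2 * (3*D - 1) ^ j) := by ring
        _ ≤ (2 * P) * (2 * (3*D - 1) ^ j) := by
            refine Nat.mul_le_mul_right _ ?_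
            omega
        _ = 4 * (P * (3*D - 1) ^ j) := by ring
    have hnumeric' : 3 * D * (3*D) ^ j ≤ P * (3*D - 1) ^ j := by omega
    -- combine everything
    set a := ((Abar part S).filter (holdsE e)).card
    set A := (Abar part S).card
    set A₂ := (Abar part S₂).card
    have hPa : P * a ≤ A₂ := by
      calc P * a ≤ P * ((Abar part S₂).filter (holdsE e)).card :=
            Nat.mul_le_mul_left _ hmono2
        _ = n * ((n-1) * ((n-2) * ((Abar part S₂).filter (holdsE e)).card)) := by
            rw [hPdef]; ring
        _ ≤ A₂ := hlop
    -- A * (3D)^j ≥ (3D-1)^j * A₂ ≥ (3D-1)^j * P * a ≥ 3D * (3D)^j * a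
    have hchain : (3*D) ^ j * (3 * D * a) ≤ (3*D) ^ j * A := by
      calc (3*D) ^ j * (3 * D * a) = (3 * D * (3*D) ^ j) * a := by ring
        _ ≤ (P * (3*D - 1) ^ j) * a := Nat.mul_le_mul_right _ hnumeric'
        _ = (3*D - 1) ^ j * (P * a) := by ring
        _ ≤ (3*D - 1) ^ j * A₂ := Nat.mul_le_mul_left _ hPa
        _ ≤ (3*D) ^ j * A := hprod
    have hpow : 0 < (3*D) ^ j := pow_pos (by omega) j
    exact Nat.le_of_mul_le_mul_left hchain hpow

lemma Abar_empty : Abar part (∅ : Finset (TT W m n)) = Om (n := n) part := by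
  apply Finset.filter_true_of_mem
  intro f _
  simp

include hdegb hD hnum in
lemma lll_pos (hOm : (Om (n := n) part).Nonempty) :
    ∀ N (S : Finset (TT W m n)), S ⊆ EE G part c σ → S.card ≤ N →
      0 < (Abar part S).card := by
  intro N
  induction N with
  | zero =>
    intro S _ h0
    have hS : S = ∅ := Finset.card_eq_zero.1 (Nat.le_zero.1 h0)
    subst hS
    rw [Abar_empty]
    exact Finset.card_pos.2 hOm
  | succ N ih =>
    intro S hSE hcard
    rcases S.eq_empty_or_nonempty with rfl | ⟨a, ha⟩
    · rw [Abar_empty]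
      exact Finset.card_pos.2 hOm
    · have hS' : S = insert a (S.erase a) := (Finset.insert_erase ha).symm
      have herase_sub : S.erase a ⊆ EE G part c σ :=
        fun t ht => hSE (Finset.mem_of_mem_erase ht)
      have herase_card : (S.erase a).card ≤ N := by
        rw [Finset.card_erase_of_mem ha]
        omega
      have hmain := lll_main G part c σ D hdegb hD hnum N (S.erase a)
        herase_sub herase_card a (hSE ha)
      have hpos := ih (S.erase a) herase_sub herase_card
      rw [hS', card_Abar_insert]
      set X := (Abar part (S.erase a)).card
      set Y := ((Abar part (S.erase a)).filter (holdsE a)).card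
      have h3 : 3 * Y ≤ 3 * D * Y := by
        have h4 : 3 ≤ 3 * D := by omega
        calc 3 * Y ≤ (3 * D) * Y := Nat.mul_le_mul_right Y h4
          _ = 3 * D * Y := rfl
      omega

end LLL

section OmNonempty

lemma Om_nonempty (part : W → Fin m)
    (hsize : ∀ i : Fin m, ((univ : Finset W).filter (fun w => part w = i)).card ≤ n) :
    (Om (n := n) part).Nonempty := by
  classical
  have hemb : ∀ i : Fin m, ∃ g : {w : W // part w = i} → Fin n,
      Function.Injective g := by
    intro i
    have hcard : Fintype.card {w : W // part w = i} ≤ Fintype.card (Fin n) := by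
      rw [Fintype.card_fin, Fintype.card_subtype]
      exact hsize i
    obtain ⟨g⟩ := Function.Embedding.nonempty_of_card_le hcard
    exact ⟨g, g.injective⟩
  choose g hg using hemb
  refine ⟨fun w => (part w, g (part w) ⟨w, rfl⟩), ?_⟩
  rw [mem_Om_iff]
  refine ⟨?_, fun x => rfl⟩
  intro a b hab
  have h1 : part a = part b := congrArg Prod.fst hab
  have h2 : g (part a) ⟨a, rfl⟩ = g (part b) ⟨b, rfl⟩ := congrArg Prod.snd hab
  have key : ∀ (j : Fin m) (hj : part a = j),
      (g j ⟨a, hj⟩ : Fin n) = g (part a) ⟨a, rfl⟩ := by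
    intro j hj
    subst hj
    rfl
  have h3 : g (part b) ⟨a, h1⟩ = g (part b) ⟨b, rfl⟩ :=
    (key (part b) h1).trans h2
  have h4 := hg (part b) h3
  exact congrArg Subtype.val h4

end OmNonempty

end Stmt19

/-- If `c` is a locally `(n/(48Δ²))`-bounded symmetric edge-coloring of the complete
`m`-partite graph `K_{m⊗n}` (vertices `Fin m × Fin n`, edges between distinct parts),
and `G` is an `m`-partite graph with parts of size at most `n` and maximum degree at
most `Δ`, then `K_{m⊗n}` contains a properly colored copy of `G` mapping the `i`-th part
of `G` into the `i`-th part of `K_{m⊗n}`. -/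
theorem stmt19 {W : Type*} [Fintype W] [DecidableEq W] (m n Δ : ℕ) (hn : 4 ≤ n)
    (G : SimpleGraph W) [DecidableRel G.Adj] (part : W → Fin m)
    (hind : ∀ u v, G.Adj u v → part u ≠ part v)
    (hsize : ∀ i : Fin m, (Finset.univ.filter (fun w => part w = i)).card ≤ n)
    (hdeg : ∀ v, G.degree v ≤ Δ)
    (c : (Fin m × Fin n) → (Fin m × Fin n) → ℕ)
    (hsym : ∀ v w, c v w = c w v)
    (hloc : ∀ (v : Fin m × Fin n) (col : ℕ),
      ((Finset.univ.filter (fun w : Fin m × Fin n =>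
        w.1 ≠ v.1 ∧ c v w = col)).card : ℚ) ≤ n / (48 * Δ ^ 2)) :
    ∃ f : W → Fin m × Fin n, Function.Injective f ∧ (∀ w, (f w).1 = part w) ∧
      ∀ u v w, G.Adj u v → G.Adj v w → u ≠ w →
        c (f u) (f v) ≠ c (f v) (f w) := by
  classical
  open Finset Stmt19 in
  set σ : W ≃ Fin (Fintype.card W) := Fintype.equivFin W with hσ
  set K : ℕ := n / (48 * Δ ^ 2) with hKdef
  -- local boundedness in ℕ form
  have hK : ∀ (β : Stmt19.V m n) (col : ℕ),
      ((univ : Finset (Stmt19.V m n)).filter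
        fun x => x.1 ≠ β.1 ∧ c β x = col).card ≤ K := by
    intro β col
    have h := hloc β col
    rcases Nat.eq_zero_or_pos (48 * Δ ^ 2) with hz | hpos
    · have hzq : ((48 * Δ ^ 2 : ℕ) : ℚ) = 0 := by exact_mod_cast hz
      have : ((n : ℚ) / (48 * Δ ^ 2)) = 0 := by
        rw [show ((48 : ℚ) * Δ ^ 2) = ((48 * Δ ^ 2 : ℕ) : ℚ) by push_cast; ring,
          hzq, div_zero]
      rw [this] at h
      have hc0 : ((univ : Finset (Stmt19.V m n)).filter
          fun x => x.1 ≠ β.1 ∧ c β x = col).card = 0 := by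
        exact_mod_cast le_antisymm h (by positivity)
      exact hc0.trans_le (Nat.zero_le K)
    · rw [hKdef, Nat.le_div_iff_mul_le hpos]
      have hposq : (0 : ℚ) < ((48 * Δ ^ 2 : ℕ) : ℚ) := by exact_mod_cast hpos
      have h' : (((univ : Finset (Stmt19.V m n)).filter
          fun x => x.1 ≠ β.1 ∧ c β x = col).card : ℚ) *
            ((48 * Δ ^ 2 : ℕ) : ℚ) ≤ (n : ℚ) := by
        rw [← le_div_iff₀ hposq]
        convert h using 2
        · rfl
        · norm_cast
      exact_mod_cast h'
  have hOm : (Stmt19.Om (n := n) part).Nonempty := Stmt19.Om_nonempty part hsize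
  -- positivity of the avoiding set
  have hAbarE : 0 < (Stmt19.Abar part (Stmt19.EE G part c σ)).card := by
    rcases (Stmt19.EE G part c σ).eq_empty_or_nonempty with hE | hne
    · rw [hE, Stmt19.Abar_empty]
      exact Finset.card_pos.2 hOm
    · obtain ⟨e₀, he₀⟩ := hne
      have he₀' := he₀
      simp only [Stmt19.EE, mem_filter, mem_univ, true_and] at he₀'
      obtain ⟨hadj1, hadj2, hord, hα, hβ, hγ, hcol⟩ := he₀'
      -- Δ ≥ 2
      have huw : e₀.1.1 ≠ e₀.1.2.2 := by
        intro hcon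
        rw [hcon] at hord
        exact absurd hord (lt_irrefl _)
      have hΔ2 : 2 ≤ Δ := by
        have hsub : ({e₀.1.1, e₀.1.2.2} : Finset W) ⊆
            G.neighborFinset e₀.1.2.1 := by
          intro t ht
          rcases Finset.mem_insert.1 ht with rfl | ht
          · rw [SimpleGraph.mem_neighborFinset]
            exact hadj1.symm
          · rw [Finset.mem_singleton] at ht
            subst ht
            rw [SimpleGraph.mem_neighborFinset]
            exact hadj2
        have h2 : ({e₀.1.1, e₀.1.2.2} : Finset W).card = 2 :=
          Finset.card_pair huw
        calc 2 = ({e₀.1.1, e₀.1.2.2} : Finset W).card := h2.symm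
          _ ≤ (G.neighborFinset e₀.1.2.1).card := Finset.card_le_card hsub
          _ = G.degree e₀.1.2.1 := G.card_neighborFinset_eq_degree _
          _ ≤ Δ := hdeg _
      -- K ≥ 1
      have hK1 : 1 ≤ K := by
        refine le_trans ?_ (hK e₀.2.2.1 (c e₀.2.2.1 e₀.2.2.2))
        refine Finset.one_le_card.2 ⟨e₀.2.2.2, ?_⟩
        rw [mem_filter]
        refine ⟨mem_univ _, ?_, rfl⟩
        rw [hγ, hβ]
        exact fun hcon => (hind _ _ hadj2) hcon.symm
      -- n ≥ 48Δ²
      have hpos48 : 0 < 48 * Δ ^ 2 := by positivity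
      have hn48 : 48 * Δ ^ 2 ≤ n := by
        have h := (Nat.le_div_iff_mul_le hpos48).1 hK1
        simpa using h
      have hKmul : 48 * Δ ^ 2 * K ≤ n := by
        rw [hKdef, mul_comm]
        exact Nat.div_mul_le_self n _
      have hn192 : 192 ≤ n := by nlinarith
      set D : ℕ := 9 * (Δ * (Δ - 1)) * (n * (n * K)) with hDdef
      have hdegb : ∀ e ∈ Stmt19.EE G part c σ,
          ((Stmt19.EE G part c σ).filter fun s => Stmt19.confl e s).card ≤ D :=
        fun e _ => Stmt19.degree_bound G part c σ K hK hind hdeg hsym hsize e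
      have hΔ1 : 1 ≤ Δ * (Δ - 1) := by
        have := Nat.mul_le_mul (show 1 ≤ Δ by omega) (show 1 ≤ Δ - 1 by omega)
        simpa using this
      have hn1 : 1 ≤ n := by omega
      have hnK1 : 1 ≤ n * (n * K) := by
        have := Nat.mul_le_mul hn1 (Nat.mul_le_mul hn1 hK1)
        simpa using this
      have hD : 1 ≤ D := by
        have := Nat.mul_le_mul (Nat.mul_le_mul (show (1:ℕ) ≤ 9 by omega) hΔ1) hnK1
        simpa [hDdef] using this
      have hnum : 9 * D ≤ 2 * (n * ((n-1) * ((n-2) * 1))) := by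
        have e1 : 48 * (9 * D) = 81 * ((Δ * (Δ - 1) * K) * 48) * n ^ 2 := by
          rw [hDdef]; ring
        have e2 : Δ * (Δ - 1) * K * 48 ≤ 48 * Δ ^ 2 * K := by
          have hΔΔ : Δ * (Δ - 1) ≤ Δ ^ 2 := by
            have := Nat.mul_le_mul_left Δ (Nat.sub_le Δ 1)
            calc Δ * (Δ - 1) ≤ Δ * Δ := this
              _ = Δ ^ 2 := by ring
          calc Δ * (Δ - 1) * K * 48 = 48 * (Δ * (Δ - 1)) * K := by ring
            _ ≤ 48 * Δ ^ 2 * K := by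
              refine Nat.mul_le_mul_right K ?_
              exact Nat.mul_le_mul_left 48 hΔΔ
        have e3 : 48 * (9 * D) ≤ 81 * n * n ^ 2 := by
          calc 48 * (9 * D) = 81 * ((Δ * (Δ - 1) * K) * 48) * n ^ 2 := e1
            _ ≤ 81 * n * n ^ 2 := by
              refine Nat.mul_le_mul_right _ ?_
              refine Nat.mul_le_mul_left 81 ?_
              exact le_trans e2 hKmul
        have e4 : 81 * n * n ^ 2 ≤ 48 * (2 * (n * ((n-1) * ((n-2) * 1)))) := by
          obtain ⟨k, rfl⟩ : ∃ k, n = k + 192 := ⟨n - 192, by omega⟩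
          have h1 : k + 192 - 1 = k + 191 := by omega
          have h2 : k + 192 - 2 = k + 190 := by omega
          rw [h1, h2]
          nlinarith [sq_nonneg k, Nat.zero_le k]
        have := le_trans e3 e4
        omega
      exact Stmt19.lll_pos G part c σ D hdegb hD hnum hOm
        (Stmt19.EE G part c σ).card (Stmt19.EE G part c σ)
        (Finset.Subset.refl _) (le_refl _)
  -- extract the injection
  obtain ⟨f, hf⟩ := Finset.card_pos.1 hAbarE
  rw [Stmt19.mem_Abar_iff] at hf
  obtain ⟨hfOm, hfav⟩ := hf
  rw [Stmt19.mem_Om_iff] at hfOm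
  refine ⟨f, hfOm.1, hfOm.2, ?_⟩
  intro u v w hadj1 hadj2 huw hceq
  rcases lt_or_gt_of_ne (fun hcon : σ u = σ w => huw (σ.injective hcon)) with
    hord | hord
  · refine hfav ((u, v, w), (f u, f v, f w)) ?_ ⟨rfl, rfl, rfl⟩
    simp only [Stmt19.EE, mem_filter, mem_univ, true_and]
    exact ⟨hadj1, hadj2, hord, hfOm.2 u, hfOm.2 v, hfOm.2 w, hceq⟩
  · refine hfav ((w, v, u), (f w, f v, f u)) ?_ ⟨rfl, rfl, rfl⟩
    simp only [Stmt19.EE, mem_filter, mem_univ, true_and]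
    refine ⟨hadj2.symm, hadj1.symm, hord, hfOm.2 w, hfOm.2 v, hfOm.2 u, ?_⟩
    calc c (f w) (f v) = c (f v) (f w) := hsym _ _
      _ = c (f u) (f v) := hceq.symm
      _ = c (f v) (f u) := hsym _ _
end
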